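/- arXiv:2409.04088 — 12 statements merged into one kernel-verified Lean document; each statement's English description precedes it below -/
import Mathlib

section
/- Let q ≥ 1 be a natural number, Z a set, and S_0, …, S_q nontrivial equivalence relations on Z such that (i) the union of S_0, …, S_q equals Z × Z, (ii) S_i ∩ S_j = Id_Z for all i ≠ j, and (iii) S_i ∘ S_j = Z × Z for all i ≠ j. Then every equivalence class of S_0 has exactly q elements. -/
/-!
Pick `z` outside the `S 0`-class of `a`; such a point exists because otherwise `S 0` would be
all of `Z × Z` and `S 1 = S 0 ∩ S 1` would be trivial. For each `i ≠ 0`, `S 0 ∘ S i = Z × Z`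
gives a point `c i` that is `S 0`-related to `a` and `S i`-related to `z`. Since distinct
relations only share the diagonal, `c i` is the unique such point and the `c i` are pairwise
distinct, while every point of the class of `a` is `S i`-related to `z` for some `i ≠ 0`.
So `i ↦ c i` is a bijection from `{i ≠ 0}` onto the class of `a`.
-/

/-- Composition of binary relations: `relComp S S' = {(a,b) : ∃ c, (a,c) ∈ S' ∧ (c,b) ∈ S}`. -/
def relComp {Z : Type*} (S S' : Set (Z × Z)) : Set (Z × Z) :=
  {p | ∃ c, (p.1, c) ∈ S' ∧ (c, p.2) ∈ S}

open Set

lemma exists_not_mem_of_inter_eq_diagonal {Z : Type*} {S T : Set (Z × Z)}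
    (hsymm : ∀ a b, (a, b) ∈ S → (b, a) ∈ S)
    (htrans : ∀ a b c, (a, b) ∈ S → (b, c) ∈ S → (a, c) ∈ S)
    (hST : S ∩ T = diagonal Z) (hT : T ≠ diagonal Z) (a : Z) : ∃ z, (z, a) ∉ S := by
  by_contra! h
  have hS : S = univ := eq_univ_of_forall fun p => htrans _ a _ (h p.1) (hsymm _ _ (h p.2))
  rw [hS, univ_inter] at hST
  exact hT hST

section PartialEquivalences

variable {Z ι : Type*} {S : ι → Set (Z × Z)}
  (hsymm : ∀ i a b, (a, b) ∈ S i → (b, a) ∈ S i)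
  (htrans : ∀ i a b c, (a, b) ∈ S i → (b, c) ∈ S i → (a, c) ∈ S i)
  (hinter : Pairwise fun i j => S i ∩ S j ⊆ diagonal Z)
include hsymm htrans hinter

lemma eq_of_rel_of_rel {i j : ι} (hij : i ≠ j) {x y a z : Z}
    (hxi : (z, x) ∈ S i) (hyi : (z, y) ∈ S i) (hxj : (a, x) ∈ S j) (hyj : (a, y) ∈ S j) :
    x = y :=
  hinter hij ⟨htrans i x z y (hsymm i z x hxi) hyi, htrans j x a y (hsymm j a x hxj) hyj⟩

lemma ncard_setOf_mem_eq_card_ne (hunion : ⋃ i, S i = univ) {i₀ : ι}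
    (hcomp : ∀ i, i ≠ i₀ → relComp (S i₀) (S i) = univ) {a z : Z} (hz : (z, a) ∉ S i₀) :
    {b | (a, b) ∈ S i₀}.ncard = Nat.card {i // i ≠ i₀} := by
  have hne : ∀ b, (a, b) ∈ S i₀ → z ≠ b := by
    rintro b hb rfl
    exact hz (hsymm i₀ a z hb)
  have hexists : ∀ i : {i // i ≠ i₀}, ∃ c, (z, c) ∈ S i ∧ (c, a) ∈ S i₀ := fun i =>
    show (z, a) ∈ relComp (S i₀) (S i) from hcomp i i.2 ▸ mem_univ (z, a)
  choose c hcz hca using hexists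
  have hinj : Function.Injective c := by
    intro i j hij
    by_contra hne_ij
    exact hne (c i) (hsymm i₀ _ _ (hca i))
      (hinter (fun h => hne_ij (Subtype.ext h)) ⟨hcz i, hij ▸ hcz j⟩)
  have hrange : {b | (a, b) ∈ S i₀} = range c := by
    ext b
    refine ⟨fun hb => ?_, ?_⟩
    · obtain ⟨i, hzb⟩ := mem_iUnion.mp (hunion ▸ mem_univ (z, b))
      have hi : i ≠ i₀ := by
        rintro rfl
        exact hz (htrans i z b a hzb (hsymm i a b hb))
      exact ⟨⟨i, hi⟩, eq_of_rel_of_rel hsymm htrans hinter hi (hcz ⟨i, hi⟩) hzb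
        (hsymm i₀ _ _ (hca ⟨i, hi⟩)) hb⟩
    · rintro ⟨i, rfl⟩
      exact hsymm i₀ _ _ (hca i)
  rw [hrange, ncard_range_of_injective hinj]

end PartialEquivalences

theorem every_class_of_S0_has_q_elements_general {Z : Type*} (q : ℕ) (hq : 1 ≤ q)
    (S : Fin (q + 1) → Set (Z × Z))
    (hsymm : ∀ i a b, (a, b) ∈ S i → (b, a) ∈ S i)
    (htrans : ∀ i a b c, (a, b) ∈ S i → (b, c) ∈ S i → (a, c) ∈ S i)
    (hnontriv : ∀ i, S i ≠ Set.diagonal Z)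
    (hunion : (⋃ i, S i) = Set.univ)
    (hinter : ∀ i j, i ≠ j → S i ∩ S j = Set.diagonal Z)
    (hcomp : ∀ i j, i ≠ j → relComp (S i) (S j) = Set.univ) :
    ∀ a : Z, Set.ncard {b | (a, b) ∈ S 0} = q := by
  intro a
  have h01 : (0 : Fin (q + 1)) ≠ 1 := by
    simp [Fin.ext_iff, Nat.mod_eq_of_lt (by omega : 1 < q + 1)]
  obtain ⟨z, hz⟩ := exists_not_mem_of_inter_eq_diagonal (hsymm 0) (htrans 0) (hinter 0 1 h01)
    (hnontriv 1) a
  rw [ncard_setOf_mem_eq_card_ne hsymm htrans (fun i j h => (hinter i j h).subset) hunion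
    (fun i hi => hcomp 0 i hi.symm) hz]
  simp

/-- If `S_0, …, S_q` (`q ≥ 1`) are nontrivial equivalence relations on `Z` whose union is
`Z × Z`, with `S_i ∩ S_j = Id_Z` and `S_i ∘ S_j = Z × Z` for `i ≠ j`, then every
equivalence class of `S_0` has exactly `q` elements. -/
theorem every_class_of_S0_has_q_elements {Z : Type*} (q : ℕ) (hq : 1 ≤ q)
    (S : Fin (q + 1) → Set (Z × Z))
    (hrefl : ∀ i z, (z, z) ∈ S i)
    (hsymm : ∀ i a b, (a, b) ∈ S i → (b, a) ∈ S i)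
    (htrans : ∀ i a b c, (a, b) ∈ S i → (b, c) ∈ S i → (a, c) ∈ S i)
    (hnontriv : ∀ i, S i ≠ Set.diagonal Z)
    (hunion : (⋃ i, S i) = Set.univ)
    (hinter : ∀ i j, i ≠ j → S i ∩ S j = Set.diagonal Z)
    (hcomp : ∀ i j, i ≠ j → relComp (S i) (S j) = Set.univ) :
    ∀ a : Z, Set.ncard {b | (a, b) ∈ S 0} = q :=
  every_class_of_S0_has_q_elements_general q hq S hsymm htrans hnontriv hunion hinter hcomp
end

section
/- Let Z be a finite set with |Z| ≥ 2, and suppose there exist |Z| − 1 mutually disjoint, symmetric and irreflexive binary relations S_0, …, S_{|Z|−2} on Z, each with domain equal to Z, whose union is Z × Z − Id_Z. Then |Z| is even. -/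
/-!
Each relation `S i` is the adjacency relation of a simple graph `G i` on `Z`, and these graphs
edge-partition the complete graph. At a vertex `v` the degrees in the `|Z| - 1` graphs therefore
add up to `|Z| - 1`, and each of them is positive, so every `G i` is `1`-regular, i.e. a perfect
matching of `Z`. Counting edges, `|Z| = 2 |E(G i)|`.
-/

open Finset Function

namespace SimpleGraph

variable {V : Type*} [Fintype V]

theorem IsRegularOfDegree.even_card_of_odd {G : SimpleGraph V} [DecidableRel G.Adj] {k : ℕ}
    (hG : G.IsRegularOfDegree k) (hk : Odd k) : Even (Fintype.card V) := by
  have hsum : k * Fintype.card V = 2 * #G.edgeFinset := by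
    rw [← sum_degrees_eq_twice_card_edges, Finset.sum_congr rfl fun v _ => hG v, sum_const,
      card_univ, smul_eq_mul, mul_comm]
  have heven : Even (k * Fintype.card V) := hsum ▸ even_two_mul _
  exact (Nat.even_mul.1 heven).resolve_left (Nat.not_even_iff_odd.2 hk)

variable {ι : Type*} [Fintype ι] {G : ι → SimpleGraph V} [∀ i, DecidableRel (G i).Adj]

theorem sum_degree_eq_of_iSup_eq_top (hdisj : Pairwise (Disjoint on G)) (htop : ⨆ i, G i = ⊤)
    (v : V) : ∑ i, (G i).degree v = Fintype.card V - 1 := by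
  classical
  have hnbr : (univ : Finset ι).biUnion (fun i => (G i).neighborFinset v) =
      (⊤ : SimpleGraph V).neighborFinset v := by
    ext w
    simpa [iSup_adj, eq_comm, Iff.comm] using congrArg (fun H => H.Adj v w) htop
  rw [← complete_graph_degree v, ← card_neighborFinset_eq_degree, ← hnbr, card_biUnion]
  · rfl
  · exact fun i _ j _ hij => disjoint_neighborFinset_of_disjoint _ _ v (hdisj hij)

theorem isRegularOfDegree_one_of_iSup_eq_top (hcard : Fintype.card ι = Fintype.card V - 1)
    (hdisj : Pairwise (Disjoint on G)) (htop : ⨆ i, G i = ⊤) (hadj : ∀ i v, ∃ w, (G i).Adj v w)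
    (i : ι) : (G i).IsRegularOfDegree 1 := by
  intro v
  have hpos : ∀ j ∈ (univ : Finset ι), 1 ≤ (G j).degree v :=
    fun j _ => (degree_pos_iff_exists_adj _ v).2 (hadj j v)
  have hsum : ∑ _j : ι, 1 = ∑ j, (G j).degree v := by
    rw [sum_degree_eq_of_iSup_eq_top hdisj htop, sum_const, card_univ, hcard, smul_eq_mul, mul_one]
  exact ((sum_eq_sum_iff_of_le hpos).1 hsum i (mem_univ i)).symm

end SimpleGraph

/-- If a finite set `Z` with `|Z| ≥ 2` carries `|Z| − 1` mutually disjoint, symmetric and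
irreflexive binary relations, each with domain `Z`, whose union is `Z × Z − Id_Z`,
then `|Z|` is even. -/
theorem even_card_of_relation_decomposition {Z : Type*} [Fintype Z]
    (hZ : 2 ≤ Fintype.card Z)
    (S : Fin (Fintype.card Z - 1) → Set (Z × Z))
    (hdisj : ∀ i j, i ≠ j → S i ∩ S j = ∅)
    (hsymm : ∀ i a b, (a, b) ∈ S i → (b, a) ∈ S i)
    (hirr : ∀ i z, (z, z) ∉ S i)
    (hdom : ∀ i a, ∃ b, (a, b) ∈ S i)
    (hunion : (⋃ i, S i) = {x : Z × Z | x.1 ≠ x.2}) :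
    Even (Fintype.card Z) := by
  classical
  let G : Fin (Fintype.card Z - 1) → SimpleGraph Z := fun i =>
    { Adj a b := (a, b) ∈ S i, symm := ⟨hsymm i⟩, loopless := ⟨hirr i⟩ }
  have hGdisj : Pairwise (Disjoint on G) := fun i j hij =>
    SimpleGraph.disjoint_left.2 fun a b hi hj =>
      (hdisj i j hij ▸ ⟨hi, hj⟩ : (a, b) ∈ (∅ : Set (Z × Z)))
  have hGtop : ⨆ i, G i = ⊤ := by
    ext a b
    simpa [G] using Set.ext_iff.1 hunion (a, b)
  have hreg := SimpleGraph.isRegularOfDegree_one_of_iSup_eq_top (by simp) hGdisj hGtop hdom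
  exact (hreg ⟨0, by omega⟩).even_card_of_odd odd_one
end

section
/- Let p ≥ 3 be odd, Z a set, and S_0, …, S_p nontrivial equivalence relations on Z such that their union is Z × Z, S_i ∩ S_j = Id_Z for all i ≠ j, and S_i ∘ S_j = Z × Z for all i ≠ j. Let W be an equivalence class of S_0. Then there do not exist p − 1 mutually disjoint, symmetric, irreflexive binary relations Z_0, …, Z_{p−2} on W, each with domain equal to W, whose union is W × W − Id_W. -/
/-- A finset of pairs closed under swap and with no diagonal elements has even cardinality. -/
lemma even_card_of_swap_closed {α : Type*} [DecidableEq α] :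
    ∀ s : Finset (α × α), (∀ x ∈ s, Prod.swap x ∈ s) → (∀ x ∈ s, x.1 ≠ x.2) → Even s.card := by
  intro s
  induction s using Finset.strongInduction with
  | _ s ih =>
    intro hsym hirr
    rcases s.eq_empty_or_nonempty with rfl | ⟨x, hx⟩
    · simp
    · have hxs : Prod.swap x ∈ s := hsym x hx
      have hxx : Prod.swap x ≠ x := by
        intro h
        have h1 : x.2 = x.1 := congrArg Prod.fst h
        exact hirr x hx h1.symm
      set t := (s.erase x).erase (Prod.swap x) with ht
      have htsub : t ⊆ s := fun y hy =>
        Finset.mem_of_mem_erase (Finset.mem_of_mem_erase hy)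
      have hxt : x ∉ t := by simp [ht]
      have hts : t ⊂ s := Finset.ssubset_iff_of_subset htsub |>.2 ⟨x, hx, hxt⟩
      have hmem : ∀ y, y ∈ t ↔ y ∈ s ∧ y ≠ x ∧ y ≠ Prod.swap x := by
        intro y; simp [ht, Finset.mem_erase]; tauto
      have hsym' : ∀ y ∈ t, Prod.swap y ∈ t := by
        intro y hy
        rw [hmem] at hy ⊢
        refine ⟨hsym y hy.1, ?_, ?_⟩
        · intro h; exact hy.2.2 (by rw [← h, Prod.swap_swap])
        · intro h
          exact hy.2.1 (by have := congrArg Prod.swap h; simpa using this)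
      have hirr' : ∀ y ∈ t, y.1 ≠ y.2 := fun y hy => hirr y (htsub hy)
      have heven := ih t hts hsym' hirr'
      have hswap_mem : Prod.swap x ∈ s.erase x := Finset.mem_erase.2 ⟨hxx, hxs⟩
      have hc1 : (s.erase x).card = s.card - 1 := Finset.card_erase_of_mem hx
      have hc2 : t.card = (s.erase x).card - 1 := Finset.card_erase_of_mem hswap_mem
      have hpos : 1 ≤ s.card := Finset.card_pos.2 ⟨x, hx⟩
      have hpos2 : 1 ≤ (s.erase x).card := Finset.card_pos.2 ⟨_, hswap_mem⟩
      obtain ⟨k, hk⟩ := heven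
      exact ⟨k + 1, by omega⟩

/-- Let `p ≥ 3` be odd and `S_0, …, S_p` nontrivial equivalence relations on `Z` whose union
is `Z × Z`, with `S_i ∩ S_j = Id_Z` and `S_i ∘ S_j = Z × Z` for `i ≠ j`. If `W` is an
equivalence class of `S_0`, then `W × W − Id_W` cannot be decomposed into `p − 1` mutually
disjoint, symmetric, irreflexive binary relations on `W`, each with domain `W`. -/
theorem no_symmetric_decomposition_of_class {Z : Type*} (p : ℕ) (hp : 3 ≤ p) (hodd : Odd p)
    (S : Fin (p + 1) → Set (Z × Z))
    (hrefl : ∀ i z, (z, z) ∈ S i)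
    (hsymm : ∀ i a b, (a, b) ∈ S i → (b, a) ∈ S i)
    (htrans : ∀ i a b c, (a, b) ∈ S i → (b, c) ∈ S i → (a, c) ∈ S i)
    (hnontriv : ∀ i, S i ≠ Set.diagonal Z)
    (hunion : (⋃ i, S i) = Set.univ)
    (hinter : ∀ i j, i ≠ j → S i ∩ S j = Set.diagonal Z)
    (hcomp : ∀ i j, i ≠ j → relComp (S i) (S j) = Set.univ)
    (a : Z) (W : Set Z) (hW : W = {b | (a, b) ∈ S 0}) :
    ¬ ∃ R : ℕ → Set (Z × Z),
        (∀ i < p - 1, R i ⊆ W ×ˢ W) ∧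
        (∀ i < p - 1, ∀ j < p - 1, i ≠ j → R i ∩ R j = ∅) ∧
        (∀ i < p - 1, ∀ x y, (x, y) ∈ R i → (y, x) ∈ R i) ∧
        (∀ i < p - 1, ∀ x, (x, x) ∉ R i) ∧
        (∀ i < p - 1, ∀ x ∈ W, ∃ y, (x, y) ∈ R i) ∧
        (⋃ i ∈ Finset.range (p - 1), R i) = {x : Z × Z | x.1 ∈ W ∧ x.2 ∈ W ∧ x.1 ≠ x.2} := by
  classical
  rintro ⟨R, hsub, hdisj, hRsymm, hirr, hdom, hcover⟩
  have hmemW : ∀ c, c ∈ W ↔ (a, c) ∈ S 0 := by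
    intro c; rw [hW]; rfl
  have i1 : Fin (p + 1) := ⟨1, by omega⟩
  have h10 : (⟨1, by omega⟩ : Fin (p + 1)) ≠ 0 := by
    simp [Fin.ext_iff]
  -- every index i gives a nontrivial pair
  have hpair : ∀ i : Fin (p + 1), ∃ x y : Z, x ≠ y ∧ (x, y) ∈ S i := by
    intro i
    by_contra hno
    push_neg at hno
    apply hnontriv i
    apply Set.Subset.antisymm
    · rintro ⟨x, y⟩ hxy
      by_contra h
      exact hno x y h hxy
    · rintro ⟨x, y⟩ (h : x = y)
      subst h; exact hrefl i x
  -- there is a point outside W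
  have hb : ∃ b, (a, b) ∉ S 0 := by
    by_contra hall
    push_neg at hall
    obtain ⟨x, y, hxy, hmem⟩ := hpair ⟨1, by omega⟩
    have hx0 : (a, x) ∈ S 0 := hall x
    have hy0 : (a, y) ∈ S 0 := hall y
    have hxy0 : (x, y) ∈ S 0 := htrans 0 x a y (hsymm 0 a x hx0) hy0
    have : (x, y) ∈ S 0 ∩ S ⟨1, by omega⟩ := ⟨hxy0, hmem⟩
    rw [hinter 0 ⟨1, by omega⟩ (Ne.symm h10)] at this
    exact hxy this
  obtain ⟨b, hbW⟩ := hb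
  -- unique intersection of each class through b with W
  have hEU : ∀ i : Fin (p + 1), i ≠ 0 → ∃! c, (a, c) ∈ S 0 ∧ (b, c) ∈ S i := by
    intro i hi
    have h1 : ((a, b) : Z × Z) ∈ relComp (S i) (S 0) := by
      rw [hcomp i 0 hi]; trivial
    obtain ⟨c, hc0, hci⟩ := h1
    refine ⟨c, ⟨hc0, hsymm i c b hci⟩, ?_⟩
    rintro c' ⟨hc'0, hc'i⟩
    have h0 : (c', c) ∈ S 0 := htrans 0 c' a c (hsymm 0 a c' hc'0) hc0
    have hii : (c', c) ∈ S i := htrans i c' b c (hsymm i b c' hc'i) (hsymm i c b hci)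
    have : (c', c) ∈ S 0 ∩ S i := ⟨h0, hii⟩
    rw [hinter 0 i (Ne.symm hi)] at this
    exact this
  -- the bijection from nonzero indices to W
  let f : {i : Fin (p + 1) // i ≠ 0} → {c : Z // c ∈ W} := fun i =>
    ⟨(hEU i.1 i.2).choose, (hmemW _).2 (hEU i.1 i.2).choose_spec.1.1⟩
  have hf_spec : ∀ i : {i : Fin (p + 1) // i ≠ 0},
      (a, (f i : Z)) ∈ S 0 ∧ (b, (f i : Z)) ∈ S i.1 := fun i => (hEU i.1 i.2).choose_spec.1
  have hf_inj : Function.Injective f := by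
    rintro i j hij
    by_contra hne
    have hne' : i.1 ≠ j.1 := fun h => hne (Subtype.ext h)
    have hc : (b, (f i : Z)) ∈ S i.1 := (hf_spec i).2
    have hc' : (b, (f i : Z)) ∈ S j.1 := by
      rw [hij]; exact (hf_spec j).2
    have : (b, (f i : Z)) ∈ S i.1 ∩ S j.1 := ⟨hc, hc'⟩
    rw [hinter i.1 j.1 hne'] at this
    have hbc : b = (f i : Z) := this
    apply hbW
    rw [hbc]
    exact (hf_spec i).1
  have hf_surj : Function.Surjective f := by
    rintro ⟨c, hcW⟩
    have hc0 : (a, c) ∈ S 0 := (hmemW c).1 hcW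
    have : ((b, c) : Z × Z) ∈ ⋃ i, S i := by rw [hunion]; trivial
    obtain ⟨_, ⟨i, rfl⟩, hci⟩ := this
    have hi0 : i ≠ 0 := by
      rintro rfl
      exact hbW (htrans 0 a c b hc0 (hsymm 0 b c hci))
    refine ⟨⟨i, hi0⟩, ?_⟩
    have := (hEU i hi0).unique ((hEU i hi0).choose_spec.1) ⟨hc0, hci⟩
    exact Subtype.ext this
  have hf_bij : Function.Bijective f := ⟨hf_inj, hf_surj⟩
  -- W is finite of cardinality p
  haveI : Fintype {c : Z // c ∈ W} := Fintype.ofBijective f hf_bij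
  haveI : Fintype ↥W := ‹Fintype {c : Z // c ∈ W}›
  have hcardW : Fintype.card ↥W = p := by
    rw [← Fintype.card_of_bijective hf_bij]
    rw [Fintype.card_subtype_compl]
    simp
  set Wf : Finset Z := W.toFinset with hWf
  have hWfmem : ∀ c, c ∈ Wf ↔ c ∈ W := by intro c; simp [hWf]
  have hWfcard : Wf.card = p := by rw [hWf, Set.toFinset_card]; exact hcardW
  -- finset versions of the relations
  set FR : ℕ → Finset (Z × Z) := fun i => (Wf ×ˢ Wf).filter (· ∈ R i) with hFR
  have hFRmem : ∀ i < p - 1, ∀ x : Z × Z, x ∈ FR i ↔ x ∈ R i := by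
    intro i hi x
    simp only [hFR, Finset.mem_filter, Finset.mem_product, hWfmem]
    constructor
    · exact fun h => h.2
    · intro h
      have := hsub i hi h
      exact ⟨⟨this.1, this.2⟩, h⟩
  -- union of the finsets is the off-diagonal
  have hUnionEq : (Finset.range (p - 1)).biUnion FR = Wf.offDiag := by
    ext x
    simp only [Finset.mem_biUnion, Finset.mem_range, Finset.mem_offDiag, hWfmem]
    constructor
    · rintro ⟨i, hi, hx⟩
      have hxR : x ∈ R i := (hFRmem i hi x).1 hx
      have : x ∈ (⋃ i ∈ Finset.range (p - 1), R i) :=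
        Set.mem_biUnion (Finset.mem_range.2 hi) hxR
      rw [hcover] at this
      exact this
    · intro hx
      have : x ∈ (⋃ i ∈ Finset.range (p - 1), R i) := by rw [hcover]; exact hx
      obtain ⟨i, hi, hxR⟩ := Set.mem_iUnion₂.1 this
      have hi' : i < p - 1 := by simpa using hi
      exact ⟨i, hi', (hFRmem i hi' x).2 hxR⟩
  -- disjointness
  have hdisjF : ∀ i ∈ Finset.range (p - 1), ∀ j ∈ Finset.range (p - 1), i ≠ j →
      Disjoint (FR i) (FR j) := by
    intro i hi j hj hij
    rw [Finset.mem_range] at hi hj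
    rw [Finset.disjoint_left]
    intro x hxi hxj
    have : x ∈ R i ∩ R j := ⟨(hFRmem i hi x).1 hxi, (hFRmem j hj x).1 hxj⟩
    rw [hdisj i hi j hj hij] at this
    exact this
  have hsum : ∑ i ∈ Finset.range (p - 1), (FR i).card = p * p - p := by
    rw [← Finset.card_biUnion hdisjF, hUnionEq, Finset.offDiag_card, hWfcard]
  -- each finset has at least p + 1 elements
  have hlower : ∀ i ∈ Finset.range (p - 1), p + 1 ≤ (FR i).card := by
    intro i hi
    rw [Finset.mem_range] at hi
    -- even cardinality
    have heven : Even (FR i).card := by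
      apply even_card_of_swap_closed
      · intro x hx
        have hxR : x ∈ R i := (hFRmem i hi x).1 hx
        exact (hFRmem i hi _).2 (hRsymm i hi x.1 x.2 hxR)
      · intro x hx h
        obtain ⟨u, v⟩ := x
        simp only at h
        subst h
        exact hirr i hi u ((hFRmem i hi _).1 hx)
    -- cardinality at least p
    have hge : p ≤ (FR i).card := by
      rw [← hWfcard]
      apply Finset.card_le_card_of_injOn
        (fun x => (x, if h : x ∈ W then (hdom i hi x h).choose else x))
      · intro x hx
        have hxW : x ∈ W := (hWfmem x).1 hx
        simp only [dif_pos hxW]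
        exact (hFRmem i hi _).2 (hdom i hi x hxW).choose_spec
      · intro x _ y _ hxy
        exact congrArg Prod.fst hxy
    obtain ⟨k, hk⟩ := heven
    obtain ⟨m, hm⟩ := hodd
    omega
  -- derive the contradiction
  have htot : (p - 1) * (p + 1) ≤ p * p - p := by
    calc (p - 1) * (p + 1) = (Finset.range (p - 1)).card • (p + 1) := by
          simp [Finset.card_range]
      _ ≤ ∑ i ∈ Finset.range (p - 1), (FR i).card :=
          Finset.card_nsmul_le_sum _ _ _ hlower
      _ = p * p - p := hsum
  obtain ⟨q, rfl⟩ : ∃ q, p = q + 3 := ⟨p - 3, by omega⟩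
  have e1 : (q + 3) * (q + 3) = (q + 3) * (q + 2) + (q + 3) := by ring
  have e2 : (q + 3 - 1) * (q + 3 + 1) = (q + 2) * (q + 4) := by
    congr 1
  rw [e2, e1, Nat.add_sub_cancel] at htot
  nlinarith [htot]
end

section
/- Let p ≥ 3 be odd, let U_0 be a set equipped with an equivalence relation E each of whose equivalence classes has exactly p elements, let R = E − Id_{U_0}, and let Z be a finite set with |Z| = p − 1. Then there exist p − 1 pairwise disjoint sets Q_0, …, Q_{p−2} ⊆ U_0 × U_0 × Z whose union is R × Z = {(a,b,z) : (a,b) ∈ R, z ∈ Z}, such that for every k < p − 1: (0) for all b ∈ U_0 and z ∈ Z there exists a ∈ U_0 with (a,b,z) ∈ Q_k; (1) for all a ∈ U_0 and z ∈ Z there exists b ∈ U_0 with (a,b,z) ∈ Q_k; (2) for all (a,b) ∈ R there exists z ∈ Z with (a,b,z) ∈ Q_k; (3) for all a, b ∈ U_0 and z ∈ Z, (a,b,z) ∈ Q_k if and only if (b,a,z) ∈ Q_{p−2−k}. -/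
/-! Auxiliary: a "signed" Latin square of order `2*q` with symbols the nonzero
elements of `ZMod p`, `p = 2*q+1`, satisfying `L (2q-1-k) j = - L k j`. -/

/-- pair index of a row/column index -/
def QPii (q k : ℕ) : ℕ := if k < q then k else 2 * q - 1 - k

/-- the signed Latin square -/
noncomputable def QPL (p q k j : ℕ) : ZMod p :=
  if (q ≤ k) ↔ (q ≤ j) then (((QPii q k + QPii q j) % q + 1 : ℕ) : ZMod p)
  else -(((QPii q k + QPii q j) % q + 1 : ℕ) : ZMod p)

lemma QPii_lt {q k : ℕ} (hq : 1 ≤ q) (hk : k < 2 * q) : QPii q k < q := by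
  unfold QPii; split_ifs <;> omega

lemma QPcast_inj {p : ℕ} [NeZero p] {x y : ℕ} (hx : x < p) (hy : y < p)
    (h : (x : ZMod p) = y) : x = y := by
  have hx' : (x : ZMod p).val = x := ZMod.val_cast_of_lt hx
  have hy' : (y : ZMod p).val = y := ZMod.val_cast_of_lt hy
  rw [← hx', ← hy', h]

lemma QPcast_ne_neg {p q : ℕ} (hpq : p = 2 * q + 1) {x y : ℕ}
    (hx1 : 1 ≤ x) (hx : x ≤ q) (hy1 : 1 ≤ y) (hy : y ≤ q) :
    (x : ZMod p) ≠ -(y : ZMod p) := by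
  intro h
  rw [eq_neg_iff_add_eq_zero, ← Nat.cast_add, ZMod.natCast_eq_zero_iff] at h
  have := Nat.le_of_dvd (by omega) h
  omega

lemma QPcast_ne_zero {p q : ℕ} (hpq : p = 2 * q + 1) {x : ℕ}
    (hx1 : 1 ≤ x) (hx : x ≤ q) : (x : ZMod p) ≠ 0 := by
  intro h
  rw [ZMod.natCast_eq_zero_iff] at h
  have := Nat.le_of_dvd (by omega) h
  omega

lemma QPL_ne_zero {p q : ℕ} (hpq : p = 2 * q + 1) (hq : 1 ≤ q) {k j : ℕ}
    (hk : k < 2 * q) (hj : j < 2 * q) : QPL p q k j ≠ 0 := by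
  have h1 : (QPii q k + QPii q j) % q + 1 ≤ q := by
    have := Nat.mod_lt (QPii q k + QPii q j) (show 0 < q by omega); omega
  unfold QPL
  split_ifs with h
  · exact QPcast_ne_zero hpq (by omega) h1
  · simp only [ne_eq, neg_eq_zero]
    exact QPcast_ne_zero hpq (by omega) h1

lemma QPL_inj {p q : ℕ} (hpq : p = 2 * q + 1) (hq : 1 ≤ q) {k k' j : ℕ}
    (hk : k < 2 * q) (hk' : k' < 2 * q) (hj : j < 2 * q)
    (h : QPL p q k j = QPL p q k' j) : k = k' := by
  haveI : NeZero p := ⟨by omega⟩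
  have hik := QPii_lt hq hk
  have hik' := QPii_lt hq hk'
  have hq0 : 0 < q := by omega
  have hv : (QPii q k + QPii q j) % q + 1 ≤ q := by
    have := Nat.mod_lt (QPii q k + QPii q j) hq0; omega
  have hv' : (QPii q k' + QPii q j) % q + 1 ≤ q := by
    have := Nat.mod_lt (QPii q k' + QPii q j) hq0; omega
  have key : (QPii q k + QPii q j) % q = (QPii q k' + QPii q j) % q →
      QPii q k = QPii q k' := by
    intro hmod
    have h2 : QPii q k ≡ QPii q k' [MOD q] :=
      Nat.ModEq.add_right_cancel' (QPii q j) hmod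
    unfold Nat.ModEq at h2
    rwa [Nat.mod_eq_of_lt hik, Nat.mod_eq_of_lt hik'] at h2
  unfold QPL at h
  split_ifs at h with h1 h2 h2
  · -- both positive
    have hnat := QPcast_inj (p := p) (by omega) (by omega) h
    have hii := key (by omega)
    have hfl : (q ≤ k) ↔ (q ≤ k') := h1.trans h2.symm
    unfold QPii at hii; split_ifs at hii <;> omega
  · exact absurd h (QPcast_ne_neg hpq (by omega) hv (by omega) hv')
  · exact absurd h.symm (QPcast_ne_neg hpq (by omega) hv' (by omega) hv)
  · rw [neg_inj] at h
    have hnat := QPcast_inj (p := p) (by omega) (by omega) h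
    have hii := key (by omega)
    have hfl : (q ≤ k) ↔ (q ≤ k') := by tauto
    unfold QPii at hii; split_ifs at hii <;> omega

lemma QPL_surj {p q : ℕ} (hpq : p = 2 * q + 1) (hq : 1 ≤ q) {j : ℕ}
    (hj : j < 2 * q) (d : ZMod p) (hd : d ≠ 0) : ∃ k < 2 * q, QPL p q k j = d := by
  haveI : NeZero p := ⟨by omega⟩
  have hij := QPii_lt hq hj
  have hm : d.val < p := ZMod.val_lt d
  have hm1 : 1 ≤ d.val := by
    rcases Nat.eq_zero_or_pos d.val with h | h
    · exact absurd ((ZMod.val_eq_zero d).mp h) hd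
    · exact h
  have hdcast : ((d.val : ℕ) : ZMod p) = d := ZMod.natCast_rightInverse d
  -- target magnitude e ∈ [1, q]
  set e : ℕ := if d.val ≤ q then d.val else p - d.val with he
  have he1 : 1 ≤ e ∧ e ≤ q := by rw [he]; split_ifs <;> omega
  set i0 : ℕ := (e - 1 + q - QPii q j) % q with hi0
  have hi0lt : i0 < q := Nat.mod_lt _ (by omega)
  have hmod : (i0 + QPii q j) % q = e - 1 := by
    rw [hi0, Nat.mod_add_mod]
    have : e - 1 + q - QPii q j + QPii q j = e - 1 + q := by omega
    rw [this, Nat.add_mod_right, Nat.mod_eq_of_lt (by omega)]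
  -- choose k
  set k : ℕ := if (d.val ≤ q) ↔ (q ≤ j) then 2 * q - 1 - i0 else i0 with hk
  have hklt : k < 2 * q := by rw [hk]; split_ifs <;> omega
  have hiik : QPii q k = i0 := by
    rw [hk]; unfold QPii; split_ifs <;> omega
  have hflagk : (q ≤ k) ↔ ((d.val ≤ q) ↔ (q ≤ j)) := by
    rw [hk]; split_ifs with h <;> simp [h] <;> omega
  refine ⟨k, hklt, ?_⟩
  unfold QPL
  rw [hiik, hmod]
  have hval : (e - 1) + 1 = e := by omega
  by_cases hdq : d.val ≤ q
  · have hsign : (q ≤ k) ↔ (q ≤ j) := by rw [hflagk]; simp [hdq]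
    rw [if_pos hsign, hval]
    have : e = d.val := by rw [he, if_pos hdq]
    rw [this, hdcast]
  · have hsign : ¬((q ≤ k) ↔ (q ≤ j)) := by
      rw [hflagk]; simp [hdq]; intro h; omega
    rw [if_neg hsign, hval]
    have hep : e = p - d.val := by rw [he, if_neg hdq]
    rw [hep, Nat.cast_sub (by omega), ZMod.natCast_self, zero_sub, neg_neg, hdcast]

lemma QPL_symm (p q k j : ℕ) : QPL p q k j = QPL p q j k := by
  unfold QPL
  rw [add_comm (QPii q k)]
  by_cases h1 : q ≤ k <;> by_cases h2 : q ≤ j <;> simp [h1, h2]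

lemma QPL_neg {p q : ℕ} (hq : 1 ≤ q) {k j : ℕ} (hk : k < 2 * q) :
    QPL p q (2 * q - 1 - k) j = -(QPL p q k j) := by
  have h1 : QPii q (2 * q - 1 - k) = QPii q k := by
    unfold QPii; split_ifs <;> omega
  have h2 : (q ≤ 2 * q - 1 - k) ↔ ¬(q ≤ k) := by omega
  unfold QPL
  rw [h1]
  by_cases h3 : q ≤ k <;> by_cases h4 : q ≤ j <;>
    simp [h2, h3, h4]

/-- Let `p ≥ 3` be odd, `E` an equivalence relation on `U₀` all of whose classes have exactly
`p` elements, `R = E − Id`, and `Z` a finite set with `|Z| = p − 1`. Then `R × Z` can be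
partitioned into `p − 1` pairwise disjoint sets `Q_0, …, Q_{p−2}` satisfying the
cylindrification conditions (0)–(2) and the transposition condition (3). -/
theorem exists_Q_partition {U0 Z : Type*} [Fintype Z] (p : ℕ) (hp : 3 ≤ p) (hodd : Odd p)
    (E : Set (U0 × U0))
    (hrefl : ∀ a, (a, a) ∈ E)
    (hsymm : ∀ a b, (a, b) ∈ E → (b, a) ∈ E)
    (htrans : ∀ a b c, (a, b) ∈ E → (b, c) ∈ E → (a, c) ∈ E)
    (hclass : ∀ a, Set.ncard {b | (a, b) ∈ E} = p)
    (hZ : Fintype.card Z = p - 1) :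
    ∃ Q : ℕ → Set (U0 × U0 × Z),
      (∀ k < p - 1, ∀ j < p - 1, k ≠ j → Q k ∩ Q j = ∅) ∧
      (⋃ k ∈ Finset.range (p - 1), Q k) =
        {s : U0 × U0 × Z | (s.1, s.2.1) ∈ E ∧ s.1 ≠ s.2.1} ∧
      (∀ k < p - 1,
        (∀ b : U0, ∀ z : Z, ∃ a : U0, (a, b, z) ∈ Q k) ∧
        (∀ a : U0, ∀ z : Z, ∃ b : U0, (a, b, z) ∈ Q k) ∧
        (∀ a b : U0, (a, b) ∈ E → a ≠ b → ∃ z : Z, (a, b, z) ∈ Q k) ∧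
        (∀ a b : U0, ∀ z : Z, ((a, b, z) ∈ Q k ↔ (b, a, z) ∈ Q (p - 2 - k)))) := by
  classical
  obtain ⟨q, hpq⟩ := hodd
  have hq : 1 ≤ q := by omega
  haveI : NeZero p := ⟨by omega⟩
  -- Step 1: a labelling c : U0 → ZMod p, bijective on each E-class.
  obtain ⟨c, hcinj, hcsurj⟩ :
      ∃ c : U0 → ZMod p,
        (∀ a b b', (a, b) ∈ E → (a, b') ∈ E → c b = c b' → b = b') ∧
        (∀ (a : U0) (w : ZMod p), ∃ b, (a, b) ∈ E ∧ c b = w) := by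
    let s : Setoid U0 := ⟨fun a b => (a, b) ∈ E,
      ⟨fun a => hrefl a, fun h => hsymm _ _ h, fun h h' => htrans _ _ _ h h'⟩⟩
    let rep : U0 → U0 := fun a => (Quotient.mk s a).out
    have hrep : ∀ a, (rep a, a) ∈ E := fun a => Quotient.mk_out (s := s) a
    have hrepeq : ∀ a b, (a, b) ∈ E → rep a = rep b := by
      intro a b h
      show (Quotient.mk s a).out = (Quotient.mk s b).out
      rw [Quotient.sound (a := a) (b := b) h]
    have hfin : ∀ a : U0, ({b | (a, b) ∈ E}).Finite := by
      intro a
      by_contra h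
      have := Set.Infinite.ncard h
      rw [hclass a] at this; omega
    have hcard : ∀ a : U0,
        @Fintype.card {b | (a, b) ∈ E} (hfin a).fintype = Fintype.card (ZMod p) := by
      intro a
      letI := (hfin a).fintype
      rw [ZMod.card p]
      have h2 := Set.ncard_eq_toFinset_card' {b | (a, b) ∈ E}
      rw [hclass a, Set.toFinset_card] at h2
      omega
    let ea : ∀ a : U0, {b | (a, b) ∈ E} ≃ ZMod p := fun a =>
      @Fintype.equivOfCardEq _ _ (hfin a).fintype _ (hcard a)
    let c : U0 → ZMod p := fun a => ea (rep a) ⟨a, hrep a⟩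
    have key : ∀ (r b : U0) (h : rep b = r) (hb : (r, b) ∈ E),
        c b = ea r ⟨b, hb⟩ := by
      intro r b h hb; subst h; rfl
    refine ⟨c, ?_, ?_⟩
    · intro a b b' hb hb' hcc
      have h1 : rep b = rep a := (hrepeq a b hb).symm
      have h2 : rep b' = rep a := (hrepeq a b' hb').symm
      have hb1 : (rep a, b) ∈ E := htrans _ _ _ (hrep a) hb
      have hb2 : (rep a, b') ∈ E := htrans _ _ _ (hrep a) hb'
      rw [key (rep a) b h1 hb1, key (rep a) b' h2 hb2] at hcc
      have := (ea (rep a)).injective hcc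
      exact congrArg Subtype.val this
    · intro a w
      let bb := (ea (rep a)).symm w
      refine ⟨bb.1, htrans _ _ _ (hsymm _ _ (hrep a)) bb.2, ?_⟩
      have h1 : rep bb.1 = rep a :=
        (hrepeq a bb.1 (htrans _ _ _ (hsymm _ _ (hrep a)) bb.2)).symm
      rw [key (rep a) bb.1 h1 bb.2]
      exact (ea (rep a)).apply_symm_apply w
  -- Step 2: an enumeration of Z
  let zE : Z ≃ Fin (p - 1) := Fintype.equivFinOfCardEq hZ
  let ζ : Z → ℕ := fun z => (zE z : ℕ)
  have hζ : ∀ z, ζ z < 2 * q := fun z => by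
    show ((zE z : ℕ)) < 2 * q
    have := (zE z).isLt; omega
  -- Step 3: define the Q's
  let Q : ℕ → Set (U0 × U0 × Z) := fun k =>
    {s | (s.1, s.2.1) ∈ E ∧ s.1 ≠ s.2.1 ∧ c s.2.1 - c s.1 = QPL p q k (ζ s.2.2)}
  have hne : ∀ {a b : U0}, (a, b) ∈ E → a ≠ b → c b - c a ≠ 0 := by
    intro a b hab hne h
    exact hne (hcinj a a b (hrefl a) hab (by
      have := sub_eq_zero.mp h; exact this.symm))
  refine ⟨Q, ?_, ?_, ?_⟩
  · -- pairwise disjoint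
    intro k hk j hj hkj
    ext ⟨a, b, z⟩
    simp only [Set.mem_inter_iff, Set.mem_empty_iff_false, iff_false]
    rintro ⟨⟨_, _, h1⟩, ⟨_, _, h2⟩⟩
    exact hkj (QPL_inj hpq hq (by omega) (by omega) (hζ z) (h1.symm.trans h2))
  · -- union
    ext ⟨a, b, z⟩
    simp only [Set.mem_iUnion, Finset.mem_range, Set.mem_setOf_eq, exists_prop]
    constructor
    · rintro ⟨k, _, hE, hne, _⟩; exact ⟨hE, hne⟩
    · rintro ⟨hE, hab⟩
      obtain ⟨k, hk, hkeq⟩ := QPL_surj hpq hq (hζ z) (c b - c a) (hne hE hab)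
      exact ⟨k, by omega, hE, hab, hkeq.symm⟩
  · -- conditions (0)-(3)
    intro k hk
    have hk2 : k < 2 * q := by omega
    have hLne : ∀ z : Z, QPL p q k (ζ z) ≠ 0 := fun z =>
      QPL_ne_zero hpq hq hk2 (hζ z)
    refine ⟨?_, ?_, ?_, ?_⟩
    · -- (0)
      intro b z
      obtain ⟨a, haE, hca⟩ := hcsurj b (c b - QPL p q k (ζ z))
      refine ⟨a, hsymm _ _ haE, ?_, by
        show c b - c a = QPL p q k (ζ z); rw [hca]; ring⟩
      intro h
      have h' : a = b := h
      apply hLne z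
      rw [h'] at hca
      linear_combination hca
    · -- (1)
      intro a z
      obtain ⟨b, hbE, hcb⟩ := hcsurj a (c a + QPL p q k (ζ z))
      refine ⟨b, hbE, ?_, by
        show c b - c a = QPL p q k (ζ z); rw [hcb]; ring⟩
      intro h
      have h' : a = b := h
      apply hLne z
      rw [← h'] at hcb
      linear_combination -hcb
    · -- (2)
      intro a b hab hne'
      obtain ⟨j, hj, hjeq⟩ := QPL_surj hpq hq (j := k) hk2 (c b - c a) (hne hab hne')
      refine ⟨zE.symm ⟨j, by omega⟩, hab, hne', ?_⟩
      have : ζ (zE.symm ⟨j, by omega⟩) = j := by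
        show ((zE (zE.symm ⟨j, by omega⟩)) : ℕ) = j
        rw [Equiv.apply_symm_apply]
      rw [this, QPL_symm]; exact hjeq.symm
    · -- (3)
      intro a b z
      have hidx : p - 2 - k = 2 * q - 1 - k := by omega
      constructor
      · rintro ⟨hE, hab, heq⟩
        refine ⟨hsymm _ _ hE, hab.symm, ?_⟩
        rw [hidx, QPL_neg hq hk2, ← heq]; ring
      · rintro ⟨hE, hab, heq⟩
        refine ⟨hsymm _ _ hE, hab.symm, ?_⟩
        rw [hidx, QPL_neg hq hk2] at heq
        have : c a - c b = -(c b - c a) := by ring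
        rw [this] at heq
        exact neg_injective heq
end

section
/- Let α ≥ 3 be a finite number and p ≥ 3 odd. Let U_0 be a set equipped with an equivalence relation E each of whose equivalence classes has exactly p elements, let R = E − Id_{U_0}, and let V_1, …, V_{α−2} be finite sets each of cardinality p − 1; write R × T for the set of α-tuples (a, b, t_1, …, t_{α−2}) with (a,b) ∈ R and t_i ∈ V_i for 1 ≤ i ≤ α−2. Then there exist p − 1 pairwise disjoint sets Q_0, …, Q_{p−2} whose union is R × T, such that: (q0) for every k < p−1, every tuple s ∈ R × T, and every coordinate position i < α, some tuple obtained from s by changing only its i-th coordinate lies in Q_k; (q1) for every k < p−1 and all a, b, t_1, …, t_{α−2}: (a,b,t_1,…,t_{α−2}) ∈ Q_k if and only if (b,a,t_1,…,t_{α−2}) ∈ Q_{p−2−k}. -/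
lemma aux_exists_bijOn {U : Type*} (n : ℕ) (hn : n ≠ 0) (S : Set U) (hS : S.Finite)
    (h : S.ncard = n) : ∃ g : U → ZMod n, Set.BijOn g S Set.univ := by
  classical
  haveI : NeZero n := ⟨hn⟩
  haveI := hS.fintype
  have hc : Fintype.card S = Fintype.card (ZMod n) := by
    rw [ZMod.card, ← h, Set.ncard_eq_toFinset_card', Set.toFinset_card]
  obtain e := Fintype.equivOfCardEq hc
  refine ⟨fun u => if h : u ∈ S then e ⟨u, h⟩ else 0, ?_, ?_, ?_⟩
  · intro x hx; exact Set.mem_univ _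
  · intro x hx y hy hxy
    simp only [dif_pos hx, dif_pos hy] at hxy
    have := e.injective hxy; exact Subtype.ext_iff.mp this
  · intro y _
    refine ⟨e.symm y, (e.symm y).2, ?_⟩
    simp only [dif_pos (e.symm y).2, Subtype.coe_eta, Equiv.apply_symm_apply]

lemma aux_sum_update {ι U M : Type*} [Fintype ι] [DecidableEq ι] [AddCommGroup M]
    (w : ι → U → M) (s : ι → U) (i : ι) (u : U) :
    ∑ j, w j (Function.update s i u j) = (∑ j, w j (s j)) - w i (s i) + w i u := by
  have h1 : (fun j => w j (Function.update s i u j))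
      = Function.update (fun j => w j (s j)) i (w i u) := by
    funext j
    rcases eq_or_ne j i with rfl | hji
    · simp
    · simp [Function.update_of_ne hji]
  rw [h1, Finset.sum_update_of_mem (Finset.mem_univ i),
    Finset.sum_eq_add_sum_sdiff_singleton_of_mem (Finset.mem_univ i) (fun j => w j (s j))]
  abel

/-- The coloring function: `d` encodes the pair part, `t` the tail part. -/
def QColor (p : ℕ) (d : ℕ) (t : ZMod (p-1)) : ZMod (p-1) :=
  if d % 2 = 1 then ((d - 1 : ℕ) : ZMod (p-1)) + t else ((d - 1 : ℕ) : ZMod (p-1)) - t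

lemma qcolor_solve_t (p : ℕ) (d : ℕ) (c : ZMod (p-1)) : ∃ t, QColor p d t = c := by
  by_cases h : d % 2 = 1
  · exact ⟨c - ((d - 1 : ℕ) : ZMod (p-1)), by simp only [QColor, if_pos h]; ring⟩
  · exact ⟨((d - 1 : ℕ) : ZMod (p-1)) - c, by simp only [QColor, if_neg h]; ring⟩

lemma qcolor_surj_d (p : ℕ) (hp : 3 ≤ p) (hodd : Odd p) (c t : ZMod (p-1)) :
    ∃ d : ℕ, 1 ≤ d ∧ d < p ∧ QColor p d t = c := by
  haveI : NeZero (p-1) := ⟨by omega⟩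
  obtain ⟨l, hl⟩ := hodd
  have hm : p - 1 = 2 * l := by omega
  have h2t : (t + t).val % 2 = 0 := by
    have h1 : (t + t).val = (t.val + t.val) % (p - 1) := ZMod.val_add t t
    have h2 := Nat.mod_mod_of_dvd (t.val + t.val) (⟨l, hm⟩ : (2:ℕ) ∣ (p-1))
    generalize hgen : (t.val + t.val) % (p - 1) = y at h1 h2
    omega
  have hpar : (c - t).val % 2 = (c + t).val % 2 := by
    have he : c + t = (c - t) + (t + t) := by ring
    have h1 : (c + t).val = ((c - t).val + (t + t).val) % (p - 1) := by
      rw [he, ZMod.val_add]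
    have h2 : ((c - t).val + (t + t).val) % (p - 1) % 2
        = ((c - t).val + (t + t).val) % 2 :=
      Nat.mod_mod_of_dvd _ ⟨l, hm⟩
    generalize hgen : ((c - t).val + (t + t).val) % (p - 1) = y at h1 h2
    omega
  by_cases hce : (c - t).val % 2 = 0
  · refine ⟨(c - t).val + 1, by omega, by have := ZMod.val_lt (c - t); omega, ?_⟩
    have hmod : ((c - t).val + 1) % 2 = 1 := by omega
    simp only [QColor, hmod, if_pos, Nat.add_sub_cancel]
    rw [ZMod.natCast_val, ZMod.cast_id]
    ring
  · refine ⟨(c + t).val + 1, by omega, by have := ZMod.val_lt (c + t); omega, ?_⟩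
    have hmod : ¬ ((c + t).val + 1) % 2 = 1 := by omega
    simp only [QColor, hmod, if_neg, Nat.add_sub_cancel, if_false]
    rw [ZMod.natCast_val, ZMod.cast_id]
    ring

lemma qcolor_swap (p : ℕ) (hp : 3 ≤ p) (hodd : Odd p) (d : ℕ) (hd1 : 1 ≤ d) (hdp : d < p)
    (t : ZMod (p-1)) : QColor p (p - d) t = -1 - QColor p d t := by
  haveI : NeZero (p-1) := ⟨by omega⟩
  obtain ⟨l, hl⟩ := hodd
  have hkey : ((p - d - 1 : ℕ) : ZMod (p-1)) + ((d - 1 : ℕ) : ZMod (p-1)) + 1 = 0 := by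
    have hnat : (p - d - 1) + (d - 1) + 1 = p - 1 := by omega
    calc ((p - d - 1 : ℕ) : ZMod (p-1)) + ((d - 1 : ℕ) : ZMod (p-1)) + 1
        = (((p - d - 1) + (d - 1) + 1 : ℕ) : ZMod (p-1)) := by push_cast; ring
      _ = ((p - 1 : ℕ) : ZMod (p-1)) := by rw [hnat]
      _ = 0 := ZMod.natCast_self (p-1)
  by_cases hd2 : d % 2 = 1
  · have h1 : ¬ (p - d) % 2 = 1 := by omega
    simp only [QColor, if_pos hd2, if_neg h1]
    linear_combination hkey
  · have h1 : (p - d) % 2 = 1 := by omega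
    simp only [QColor, if_pos h1, if_neg hd2]
    linear_combination hkey

lemma qcolor_neg_k (p k : ℕ) (hp : 3 ≤ p) (hk : k < p - 1) :
    ((p - 2 - k : ℕ) : ZMod (p-1)) = -1 - (k : ZMod (p-1)) := by
  haveI : NeZero (p-1) := ⟨by omega⟩
  have hnat : (p - 2 - k) + k + 1 = p - 1 := by omega
  have h : ((p - 2 - k : ℕ) : ZMod (p-1)) + (k : ZMod (p-1)) + 1 = 0 := by
    calc ((p - 2 - k : ℕ) : ZMod (p-1)) + (k : ZMod (p-1)) + 1
        = (((p - 2 - k) + k + 1 : ℕ) : ZMod (p-1)) := by push_cast; ring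
      _ = ((p - 1 : ℕ) : ZMod (p-1)) := by rw [hnat]
      _ = 0 := ZMod.natCast_self (p-1)
  linear_combination h

/-- Let `α ≥ 3`, `p ≥ 3` odd, `E` an equivalence relation on `U₀ ⊆ U` all of whose classes
have exactly `p` elements, `R = E − Id`, and `V_1, …, V_{α−2}` sets of cardinality `p − 1`.
Writing `R × T` for the set of `α`-tuples `(a, b, t₁, …, t_{α−2})` with `(a,b) ∈ R` and
`tᵢ ∈ Vᵢ`, there is a partition of `R × T` into `p − 1` pairwise disjoint sets
`Q_0, …, Q_{p−2}` that are big (q0) and satisfy the transposition condition (q1). -/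
theorem exists_Q_partition_dim_alpha {U : Type*} (α p : ℕ) (hα : 3 ≤ α) (hp : 3 ≤ p)
    (hodd : Odd p)
    (U0 : Set U) (V : ℕ → Set U) (E : Set (U × U))
    (hEsub : ∀ a b, (a, b) ∈ E → a ∈ U0 ∧ b ∈ U0)
    (hrefl : ∀ a ∈ U0, (a, a) ∈ E)
    (hsymm : ∀ a b, (a, b) ∈ E → (b, a) ∈ E)
    (htrans : ∀ a b c, (a, b) ∈ E → (b, c) ∈ E → (a, c) ∈ E)
    (hclass : ∀ a ∈ U0, Set.ncard {b | (a, b) ∈ E} = p)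
    (hVfin : ∀ j, 1 ≤ j → j ≤ α - 2 → (V j).Finite)
    (hV : ∀ j, 1 ≤ j → j ≤ α - 2 → Set.ncard (V j) = p - 1) :
    ∀ RT : Set (Fin α → U),
      RT = {s : Fin α → U |
              (s ⟨0, by omega⟩, s ⟨1, by omega⟩) ∈ E ∧
              s ⟨0, by omega⟩ ≠ s ⟨1, by omega⟩ ∧
              ∀ i : Fin α, 2 ≤ (i : ℕ) → s i ∈ V ((i : ℕ) - 1)} →
      ∃ Q : ℕ → Set (Fin α → U),
        (∀ k < p - 1, ∀ j < p - 1, k ≠ j → Q k ∩ Q j = ∅) ∧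
        (⋃ k ∈ Finset.range (p - 1), Q k) = RT ∧
        (∀ k < p - 1, ∀ s ∈ RT, ∀ i : Fin α, ∃ u : U, Function.update s i u ∈ Q k) ∧
        (∀ k < p - 1, ∀ s : Fin α → U,
          s ∈ Q k ↔
            s ∘ (Equiv.swap (⟨0, by omega⟩ : Fin α) ⟨1, by omega⟩) ∈ Q (p - 2 - k)) := by
  classical
  intro RT hRT
  haveI hpz : NeZero p := ⟨by omega⟩
  haveI hqz : NeZero (p - 1) := ⟨by omega⟩
  -- the labelling of equivalence classes
  have hcls_eq : ∀ a b, (a, b) ∈ E → {x | (a, x) ∈ E} = {x | (b, x) ∈ E} := by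
    intro a b hab; ext x
    exact ⟨fun h => htrans _ _ _ (hsymm _ _ hab) h, fun h => htrans _ _ _ hab h⟩
  have hclsfin : ∀ b ∈ U0, ({x | (b, x) ∈ E}).Finite := by
    intro b hb
    apply Set.finite_of_ncard_ne_zero
    rw [hclass b hb]; omega
  have hexF : ∀ S : Set U, ∃ g : U → ZMod p,
      (∃ b ∈ U0, S = {x | (b, x) ∈ E}) → Set.BijOn g S Set.univ := by
    intro S
    by_cases h : ∃ b ∈ U0, S = {x | (b, x) ∈ E}
    · obtain ⟨b, hb, rfl⟩ := h
      obtain ⟨g, hg⟩ := aux_exists_bijOn p (by omega) _ (hclsfin b hb) (hclass b hb)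
      exact ⟨g, fun _ => hg⟩
    · exact ⟨fun _ => 0, fun hc => absurd hc h⟩
  choose F hF using hexF
  let f : U → ZMod p := fun a => F {x | (a, x) ∈ E} a
  have hf : ∀ b ∈ U0, Set.BijOn f {x | (b, x) ∈ E} Set.univ := by
    intro b hb
    refine (hF {x | (b, x) ∈ E} ⟨b, hb, rfl⟩).congr ?_
    intro x hx
    show F {y | (b, y) ∈ E} x = F {y | (x, y) ∈ E} x
    rw [hcls_eq b x hx]
  -- the labelling of the V j
  have hexG : ∀ j : ℕ, ∃ g : U → ZMod (p - 1),
      (1 ≤ j ∧ j ≤ α - 2) → Set.BijOn g (V j) Set.univ := by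
    intro j
    by_cases h : 1 ≤ j ∧ j ≤ α - 2
    · obtain ⟨g, hg⟩ := aux_exists_bijOn (p - 1) (by omega) _ (hVfin j h.1 h.2) (hV j h.1 h.2)
      exact ⟨g, fun _ => hg⟩
    · exact ⟨fun _ => 0, fun hc => absurd hc h⟩
  choose g hg using hexG
  -- basic definitions
  let i0 : Fin α := ⟨0, by omega⟩
  let i1 : Fin α := ⟨1, by omega⟩
  have hi0v : (i0 : ℕ) = 0 := rfl
  have hi1v : (i1 : ℕ) = 1 := rfl
  let w : Fin α → U → ZMod (p - 1) := fun i u => if 2 ≤ (i : ℕ) then g ((i : ℕ) - 1) u else 0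
  let T : (Fin α → U) → ZMod (p - 1) := fun s => ∑ i, w i (s i)
  let D : (Fin α → U) → ℕ := fun s => (f (s i0) - f (s i1)).val
  let χ : (Fin α → U) → ZMod (p - 1) := fun s => QColor p (D s) (T s)
  have hwdef : ∀ (i : Fin α) (u : U),
      w i u = if 2 ≤ (i : ℕ) then g ((i : ℕ) - 1) u else 0 := fun _ _ => rfl
  have hTdef : ∀ s : Fin α → U, T s = ∑ i, w i (s i) := fun _ => rfl
  have hDdef : ∀ s : Fin α → U, D s = (f (s i0) - f (s i1)).val := fun _ => rfl
  have hχdef : ∀ s : Fin α → U, χ s = QColor p (D s) (T s) := fun _ => rfl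
  have hmem : ∀ s : Fin α → U, s ∈ RT ↔
      ((s i0, s i1) ∈ E ∧ s i0 ≠ s i1 ∧
        ∀ i : Fin α, 2 ≤ (i : ℕ) → s i ∈ V ((i : ℕ) - 1)) := by
    intro s; rw [hRT]; exact Iff.rfl
  have hTupd : ∀ (s : Fin α → U) (i : Fin α) (u : U),
      T (Function.update s i u) = T s - w i (s i) + w i u := fun s i u =>
    aux_sum_update w s i u
  have hw0 : ∀ x, w i0 x = 0 := by
    intro x; rw [hwdef]; rw [if_neg (by omega)]
  have hw1 : ∀ x, w i1 x = 0 := by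
    intro x; rw [hwdef]; rw [if_neg (by omega)]
  have hDrange : ∀ s, s ∈ RT → 1 ≤ D s ∧ D s < p := by
    intro s hs
    obtain ⟨h1, h2, -⟩ := (hmem s).mp hs
    have hU : s i0 ∈ U0 := (hEsub _ _ h1).1
    have hinj := (hf (s i0) hU).injOn
    have hm0 : s i0 ∈ {x | (s i0, x) ∈ E} := hrefl _ hU
    have hm1 : s i1 ∈ {x | (s i0, x) ∈ E} := h1
    have hfne : f (s i0) ≠ f (s i1) := fun h => h2 (hinj hm0 hm1 h)
    have hne0 : f (s i0) - f (s i1) ≠ 0 := sub_ne_zero.mpr hfne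
    have hv0 : (f (s i0) - f (s i1)).val ≠ 0 := fun h => hne0 ((ZMod.val_eq_zero _).mp h)
    refine ⟨by rw [hDdef]; omega, ?_⟩
    rw [hDdef]; exact ZMod.val_lt _
  have hcastinj : ∀ k j : ℕ, k < p - 1 → j < p - 1 →
      (k : ZMod (p - 1)) = (j : ZMod (p - 1)) → k = j := by
    intro k j hk hj h
    have := congrArg ZMod.val h
    rwa [ZMod.val_cast_of_lt hk, ZMod.val_cast_of_lt hj] at this
  refine ⟨fun k => {s | s ∈ RT ∧ χ s = (k : ZMod (p - 1))}, ?_, ?_, ?_, ?_⟩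
  · -- disjointness
    intro k hk j hj hkj
    ext s
    simp only [Set.mem_inter_iff, Set.mem_setOf_eq, Set.mem_empty_iff_false, iff_false]
    rintro ⟨⟨-, hks⟩, -, hjs⟩
    exact hkj (hcastinj k j hk hj (by rw [← hks, ← hjs]))
  · -- union
    ext s
    simp only [Set.mem_iUnion, Finset.mem_range, Set.mem_setOf_eq, exists_prop]
    constructor
    · rintro ⟨k, -, hs, -⟩; exact hs
    · intro hs
      refine ⟨(χ s).val, ZMod.val_lt _, hs, ?_⟩
      rw [ZMod.natCast_val, ZMod.cast_id]
  · -- bigness (q0)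
    intro k hk s hs i
    obtain ⟨hE01, hne, hV2⟩ := (hmem s).mp hs
    have hs0U : s i0 ∈ U0 := (hEsub _ _ hE01).1
    have hs1U : s i1 ∈ U0 := (hEsub _ _ hE01).2
    by_cases hi2 : 2 ≤ (i : ℕ)
    · -- a tail coordinate
      have hii0 : i0 ≠ i := Fin.ne_of_val_ne (by omega)
      have hii1 : i1 ≠ i := Fin.ne_of_val_ne (by omega)
      have hj1 : 1 ≤ (i : ℕ) - 1 := by omega
      have hj2 : (i : ℕ) - 1 ≤ α - 2 := by have := i.isLt; omega
      have hDs := hDrange s hs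
      obtain ⟨tgt, htgt⟩ := qcolor_solve_t p (D s) ((k : ZMod (p - 1)))
      obtain ⟨u, huV, hu⟩ := (hg ((i : ℕ) - 1) ⟨hj1, hj2⟩).surjOn
        (Set.mem_univ (tgt - (T s - w i (s i))))
      have hwi : w i u = tgt - (T s - w i (s i)) := by
        rw [hwdef, if_pos hi2]; exact hu
      have hupdmem : Function.update s i u ∈ RT := by
        refine (hmem _).mpr ⟨?_, ?_, ?_⟩
        · rw [Function.update_of_ne hii0, Function.update_of_ne hii1]; exact hE01
        · rw [Function.update_of_ne hii0, Function.update_of_ne hii1]; exact hne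
        · intro j hj
          rcases eq_or_ne j i with rfl | hji
          · rw [Function.update_self]; exact huV
          · rw [Function.update_of_ne hji]; exact hV2 j hj
      refine ⟨u, hupdmem, ?_⟩
      rw [hχdef]
      have hD : D (Function.update s i u) = D s := by
        rw [hDdef, hDdef, Function.update_of_ne hii0, Function.update_of_ne hii1]
      have hT : T (Function.update s i u) = tgt := by
        rw [hTupd, hwi]; ring
      rw [hD, hT]; exact htgt
    · -- a pair coordinate
      obtain ⟨d, hd1, hdp, hdq⟩ := qcolor_surj_d p hp hodd ((k : ZMod (p - 1))) (T s)
      have hdz : ((d : ℕ) : ZMod p).val = d := ZMod.val_cast_of_lt hdp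
      have h10 : i1 ≠ i0 := Fin.ne_of_val_ne (by omega)
      rcases (by omega : (i : ℕ) = 0 ∨ (i : ℕ) = 1) with hi | hi
      · -- i = i0
        have hii : i = i0 := Fin.ext (by rw [hi0v]; exact hi)
        subst hii
        obtain ⟨a, haE, hfa⟩ := (hf (s i1) hs1U).surjOn
          (Set.mem_univ (f (s i1) + (d : ZMod p)))
        have hfd : f a - f (s i1) = (d : ZMod p) := by rw [hfa]; ring
        have hane : a ≠ s i1 := by
          intro h
          have h0 : ((d : ℕ) : ZMod p) = 0 := by rw [← hfd, h]; ring
          rw [h0, ZMod.val_zero] at hdz; omega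
        have hupdmem : Function.update s i0 a ∈ RT := by
          refine (hmem _).mpr ⟨?_, ?_, ?_⟩
          · rw [Function.update_self, Function.update_of_ne h10]
            exact hsymm _ _ haE
          · rw [Function.update_self, Function.update_of_ne h10]
            exact hane
          · intro j hj
            have hji : j ≠ i0 := Fin.ne_of_val_ne (by omega)
            rw [Function.update_of_ne hji]; exact hV2 j hj
        refine ⟨a, hupdmem, ?_⟩
        rw [hχdef]
        have hD : D (Function.update s i0 a) = d := by
          rw [hDdef, Function.update_self, Function.update_of_ne h10, hfd, hdz]
        have hT : T (Function.update s i0 a) = T s := by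
          rw [hTupd, hw0, hw0]; ring
        rw [hD, hT]; exact hdq
      · -- i = i1
        have hii : i = i1 := Fin.ext (by rw [hi1v]; exact hi)
        subst hii
        have h01 : i0 ≠ i1 := Fin.ne_of_val_ne (by omega)
        obtain ⟨b, hbE, hfb⟩ := (hf (s i0) hs0U).surjOn
          (Set.mem_univ (f (s i0) - (d : ZMod p)))
        have hfd : f (s i0) - f b = (d : ZMod p) := by rw [hfb]; ring
        have hbne : s i0 ≠ b := by
          intro h
          have h0 : ((d : ℕ) : ZMod p) = 0 := by rw [← hfd, ← h]; ring
          rw [h0, ZMod.val_zero] at hdz; omega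
        have hupdmem : Function.update s i1 b ∈ RT := by
          refine (hmem _).mpr ⟨?_, ?_, ?_⟩
          · rw [Function.update_self, Function.update_of_ne h01]
            exact hbE
          · rw [Function.update_self, Function.update_of_ne h01]
            exact hbne
          · intro j hj
            have hji : j ≠ i1 := Fin.ne_of_val_ne (by omega)
            rw [Function.update_of_ne hji]; exact hV2 j hj
        refine ⟨b, hupdmem, ?_⟩
        rw [hχdef]
        have hD : D (Function.update s i1 b) = d := by
          rw [hDdef, Function.update_self, Function.update_of_ne h01, hfd, hdz]
        have hT : T (Function.update s i1 b) = T s := by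
          rw [hTupd, hw1, hw1]; ring
        rw [hD, hT]; exact hdq
  · -- the swap condition (q1)
    have hswap0 : ∀ s : Fin α → U, (s ∘ Equiv.swap i0 i1) i0 = s i1 := by
      intro s; simp [Equiv.swap_apply_left]
    have hswap1 : ∀ s : Fin α → U, (s ∘ Equiv.swap i0 i1) i1 = s i0 := by
      intro s; simp [Equiv.swap_apply_right]
    have hswapj : ∀ (s : Fin α → U) (j : Fin α), 2 ≤ (j : ℕ) →
        (s ∘ Equiv.swap i0 i1) j = s j := by
      intro s j hj
      have hj0 : j ≠ i0 := Fin.ne_of_val_ne (by omega)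
      have hj1 : j ≠ i1 := Fin.ne_of_val_ne (by omega)
      simp [Equiv.swap_apply_of_ne_of_ne hj0 hj1]
    have hswapswap : ∀ s : Fin α → U, (s ∘ Equiv.swap i0 i1) ∘ Equiv.swap i0 i1 = s := by
      intro s; funext j
      simp [Function.comp, Equiv.swap_apply_self]
    have hswapRT : ∀ s, s ∈ RT → s ∘ Equiv.swap i0 i1 ∈ RT := by
      intro s hs
      obtain ⟨h1, h2, h3⟩ := (hmem s).mp hs
      refine (hmem _).mpr ⟨?_, ?_, ?_⟩
      · rw [hswap0, hswap1]; exact hsymm _ _ h1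
      · rw [hswap0, hswap1]; exact fun h => h2 h.symm
      · intro j hj; rw [hswapj s j hj]; exact h3 j hj
    have hTswap : ∀ s : Fin α → U, T (s ∘ Equiv.swap i0 i1) = T s := by
      intro s
      rw [hTdef, hTdef]
      apply Finset.sum_congr rfl
      intro j _
      by_cases hj : 2 ≤ (j : ℕ)
      · rw [hswapj s j hj]
      · rw [hwdef, hwdef, if_neg hj, if_neg hj]
    have hfwd : ∀ k, k < p - 1 → ∀ s : Fin α → U,
        (s ∈ RT ∧ χ s = (k : ZMod (p - 1))) →
        (s ∘ Equiv.swap i0 i1 ∈ RT ∧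
          χ (s ∘ Equiv.swap i0 i1) = ((p - 2 - k : ℕ) : ZMod (p - 1))) := by
      intro k hk s hsQ
      obtain ⟨hsRT, hχs⟩ := hsQ
      refine ⟨hswapRT s hsRT, ?_⟩
      obtain ⟨hD1, hD2⟩ := hDrange s hsRT
      have hx0 : f (s i0) - f (s i1) ≠ 0 := by
        intro h
        rw [hDdef, h, ZMod.val_zero] at hD1; omega
      have hD : D (s ∘ Equiv.swap i0 i1) = p - D s := by
        rw [hDdef, hDdef, hswap0, hswap1]
        have hneg : f (s i1) - f (s i0) = -(f (s i0) - f (s i1)) := by ring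
        rw [hneg, ZMod.neg_val, if_neg hx0]
      have hQs : QColor p (D s) (T s) = (k : ZMod (p - 1)) := hχs
      rw [hχdef, hD, hTswap, qcolor_swap p hp hodd (D s) hD1 hD2, hQs,
        qcolor_neg_k p k hp hk]
    intro k hk s
    constructor
    · intro h
      exact hfwd k hk s h
    · intro h
      have h2 : p - 2 - k < p - 1 := by omega
      have h3 := hfwd (p - 2 - k) h2 (s ∘ Equiv.swap i0 i1) h
      rw [hswapswap] at h3
      have hkk : p - 2 - (p - 2 - k) = k := by omega
      rwa [hkk] at h3
end

section
/- Let p ≥ 3 be odd and W a finite set with |W| = p. Then W × W − Id_W can be partitioned into p − 2 mutually disjoint symmetric irreflexive binary relations ρ_0, …, ρ_{p−3} on W, each with domain equal to W. -/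
/-- Index assignment for the partition of off-diagonal pairs of `ZMod p`. -/
private def fAux (p : ℕ) (a b : ZMod p) : ℕ :=
  if (a + b).val < p - 2 then (a + b).val
  else if (a + b).val = p - 1 then 2 * min a.val b.val
  else if min a.val b.val = (p - 3) / 2 then p - 3
  else p - 2 * min a.val b.val - 4

private lemma fAux_symm (p : ℕ) (a b : ZMod p) : fAux p a b = fAux p b a := by
  simp only [fAux, add_comm a b, min_comm a.val b.val]

private lemma fAux_lt (p : ℕ) (hp : 3 ≤ p) (hodd : Odd p) (a b : ZMod p) (hab : a ≠ b) :
    fAux p a b < p - 2 := by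
  haveI : NeZero p := ⟨by omega⟩
  obtain ⟨k, hk⟩ := hodd
  have hva := ZMod.val_lt a
  have hvb := ZMod.val_lt b
  have hvne : a.val ≠ b.val := fun h => hab (ZMod.val_injective p h)
  have hvs := ZMod.val_lt (a + b)
  have key : a.val + b.val = (a + b).val ∨ a.val + b.val = (a + b).val + p := by
    have hadd := ZMod.val_add a b
    rcases Nat.lt_or_ge (a.val + b.val) p with h | h
    · left; rw [hadd, Nat.mod_eq_of_lt h]
    · right; rw [hadd, Nat.mod_eq_sub_mod h, Nat.mod_eq_of_lt (by omega)]; omega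
  unfold fAux
  split_ifs with h1 h2 h3
  · exact h1
  · omega
  · omega
  · omega

private lemma fAux_domain (p : ℕ) (hp : 3 ≤ p) (hodd : Odd p) (i : ℕ) (hi : i < p - 2)
    (a : ZMod p) : ∃ b : ZMod p, a ≠ b ∧ fAux p a b = i := by
  haveI : NeZero p := ⟨by omega⟩
  obtain ⟨k, hk⟩ := hodd
  have h2 : IsUnit (2 : ZMod p) := by
    have h : Nat.Coprime 2 p := (Nat.prime_two.coprime_iff_not_dvd).2 (by omega)
    have := (ZMod.isUnit_iff_coprime 2 p).2 h
    simpa using this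
  by_cases hcase : 2 * a = (i : ZMod p)
  · -- a is the vertex missed by the sum-class `i`
    rcases Nat.even_or_odd i with hev | hodd'
    · -- even case: use the sum ≡ -1 class
      obtain ⟨j, hj⟩ : ∃ j, i = 2 * j := by rcases hev with ⟨m, hm⟩; exact ⟨m, by omega⟩
      have hjp : 2 * j < p - 2 := hj ▸ hi
      have hcast : (2 : ZMod p) * ((j : ℕ) : ZMod p) = (i : ZMod p) := by
        rw [hj]; push_cast; ring
      have haj : a = ((j : ℕ) : ZMod p) := h2.mul_left_cancel (by rw [hcase, hcast])
      refine ⟨((p - j - 1 : ℕ) : ZMod p), ?_, ?_⟩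
      · intro h
        have := congrArg ZMod.val (haj ▸ h)
        rw [ZMod.val_natCast_of_lt (by omega), ZMod.val_natCast_of_lt (by omega)] at this
        omega
      · have hsum : a + ((p - j - 1 : ℕ) : ZMod p) = ((p - 1 : ℕ) : ZMod p) := by
          rw [haj, ← Nat.cast_add, show j + (p - j - 1) = p - 1 by omega]
        have hv1 : (a + ((p - j - 1 : ℕ) : ZMod p)).val = p - 1 := by
          rw [hsum, ZMod.val_natCast_of_lt (by omega)]
        have hv2 : a.val = j := by rw [haj, ZMod.val_natCast_of_lt (by omega)]
        have hv3 : (((p - j - 1 : ℕ) : ZMod p)).val = p - j - 1 :=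
          ZMod.val_natCast_of_lt (by omega)
        unfold fAux
        rw [hv1, hv2, hv3]
        split_ifs <;> omega
    · -- odd case: use the sum ≡ -2 class
      obtain ⟨m, hm⟩ := hodd'
      have hile : i ≤ p - 4 := by omega
      obtain ⟨j, hj⟩ : ∃ j, 2 * j = p - 4 - i := ⟨k - 2 - m, by omega⟩
      have hcast : (2 : ZMod p) * ((p - j - 2 : ℕ) : ZMod p) = (i : ZMod p) := by
        have h' : ((2 * (p - j - 2) : ℕ) : ZMod p) = ((i + p : ℕ) : ZMod p) := by
          rw [show 2 * (p - j - 2) = i + p by omega]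
        push_cast [ZMod.natCast_self] at h'
        simpa using h'
      have haj : a = ((p - j - 2 : ℕ) : ZMod p) := h2.mul_left_cancel (by rw [hcase, hcast])
      refine ⟨((j : ℕ) : ZMod p), ?_, ?_⟩
      · intro h
        have := congrArg ZMod.val (haj ▸ h)
        rw [ZMod.val_natCast_of_lt (by omega), ZMod.val_natCast_of_lt (by omega)] at this
        omega
      · have hsum : a + ((j : ℕ) : ZMod p) = ((p - 2 : ℕ) : ZMod p) := by
          rw [haj, ← Nat.cast_add, show (p - j - 2) + j = p - 2 by omega]
        have hv1 : (a + ((j : ℕ) : ZMod p)).val = p - 2 := by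
          rw [hsum, ZMod.val_natCast_of_lt (by omega)]
        have hv2 : a.val = p - j - 2 := by rw [haj, ZMod.val_natCast_of_lt (by omega)]
        have hv3 : (((j : ℕ) : ZMod p)).val = j := ZMod.val_natCast_of_lt (by omega)
        unfold fAux
        rw [hv1, hv2, hv3]
        split_ifs <;> omega
  · -- a is covered by the sum-class `i` itself
    refine ⟨(i : ZMod p) - a, ?_, ?_⟩
    · intro h
      apply hcase
      have : a + ((i : ZMod p) - a) = a + a := by rw [← h]
      rw [add_sub_cancel] at this
      rw [this]; ring
    · have hv1 : (a + ((i : ZMod p) - a)).val = i := by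
        rw [add_sub_cancel, ZMod.val_natCast_of_lt (by omega)]
      unfold fAux
      rw [hv1]
      split_ifs <;> omega

/-- Let `p ≥ 3` be odd and `W` a finite set with `|W| = p`. Then `W × W − Id_W` can be
partitioned into `p − 2` mutually disjoint symmetric irreflexive binary relations on `W`,
each with domain `W`. -/
theorem exists_symmetric_partition_into_p_sub_two {W : Type*} [Fintype W]
    (p : ℕ) (hp : 3 ≤ p) (hodd : Odd p) (hW : Fintype.card W = p) :
    ∃ ρ : ℕ → Set (W × W),
      (∀ i < p - 2, ∀ j < p - 2, i ≠ j → ρ i ∩ ρ j = ∅) ∧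
      (∀ i < p - 2, ∀ a b : W, (a, b) ∈ ρ i → (b, a) ∈ ρ i) ∧
      (∀ i < p - 2, ∀ a : W, (a, a) ∉ ρ i) ∧
      (∀ i < p - 2, ∀ a : W, ∃ b : W, (a, b) ∈ ρ i) ∧
      (⋃ i ∈ Finset.range (p - 2), ρ i) = {x : W × W | x.1 ≠ x.2} := by
  haveI : NeZero p := ⟨by omega⟩
  obtain ⟨e⟩ : Nonempty (W ≃ ZMod p) :=
    ⟨Fintype.equivOfCardEq (by rw [hW, ZMod.card])⟩
  refine ⟨fun i => {x : W × W | x.1 ≠ x.2 ∧ fAux p (e x.1) (e x.2) = i}, ?_, ?_, ?_, ?_, ?_⟩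
  · intro i hi j hj hij
    ext x
    simp only [Set.mem_inter_iff, Set.mem_setOf_eq, Set.mem_empty_iff_false, iff_false]
    rintro ⟨⟨-, h1⟩, ⟨-, h2⟩⟩
    exact hij (h1 ▸ h2)
  · intro i hi a b hab
    exact ⟨(Ne.symm hab.1), by rw [fAux_symm]; exact hab.2⟩
  · intro i hi a h
    exact h.1 rfl
  · intro i hi a
    obtain ⟨β, hβne, hβ⟩ := fAux_domain p hp hodd i hi (e a)
    refine ⟨e.symm β, ?_, ?_⟩
    · intro h
      exact hβne (by simpa using congrArg e h)
    · simpa using hβ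
  · ext x
    simp only [Set.mem_iUnion, Finset.mem_range, Set.mem_setOf_eq]
    constructor
    · rintro ⟨i, hi, hne, -⟩
      exact hne
    · intro hne
      have hene : e x.1 ≠ e x.2 := fun h => hne (e.injective h)
      exact ⟨fAux p (e x.1) (e x.2), fAux_lt p hp hodd _ _ hene, hne, rfl⟩
end

section
/- Let p ≥ 2 and let W be a finite set with |W| = p. Then W × W − Id_W can be partitioned into p − 1 mutually disjoint irreflexive binary relations S_0, …, S_{p−2} on W, each with domain equal to W and range equal to W, such that for all a, b ∈ W and all i < p − 1: (a,b) ∈ S_i if and only if (b,a) ∈ S_{p−2−i}. -/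
/-- Let `p ≥ 2` and `W` a finite set with `|W| = p`. Then `W × W − Id_W` can be partitioned
into `p − 1` mutually disjoint irreflexive binary relations on `W`, each with domain `W`
and range `W`, such that `(a,b) ∈ S_i` iff `(b,a) ∈ S_{p−2−i}`. -/
theorem exists_partition_with_reversal {W : Type*} [Fintype W]
    (p : ℕ) (hp : 2 ≤ p) (hW : Fintype.card W = p) :
    ∃ S : ℕ → Set (W × W),
      (∀ i < p - 1, ∀ j < p - 1, i ≠ j → S i ∩ S j = ∅) ∧
      (∀ i < p - 1, ∀ a : W, (a, a) ∉ S i) ∧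
      (∀ i < p - 1, ∀ a : W, ∃ b : W, (a, b) ∈ S i) ∧
      (∀ i < p - 1, ∀ b : W, ∃ a : W, (a, b) ∈ S i) ∧
      (∀ i < p - 1, ∀ a b : W, ((a, b) ∈ S i ↔ (b, a) ∈ S (p - 2 - i))) ∧
      (⋃ i ∈ Finset.range (p - 1), S i) = {x : W × W | x.1 ≠ x.2} := by
  have hp0 : p ≠ 0 := by omega
  haveI : NeZero p := ⟨hp0⟩
  obtain ⟨e⟩ : Nonempty (W ≃ ZMod p) := by
    apply Fintype.card_eq.mp
    simp [hW, ZMod.card]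
  have hval : ∀ i < p - 1, ((i + 1 : ℕ) : ZMod p).val = i + 1 := by
    intro i hi
    exact ZMod.val_natCast_of_lt (by omega)
  refine ⟨fun i => {x : W × W | e x.2 - e x.1 = ((i + 1 : ℕ) : ZMod p)},
    ?_, ?_, ?_, ?_, ?_, ?_⟩
  · intro i hi j hj hij
    ext x
    simp only [Set.mem_inter_iff, Set.mem_setOf_eq, Set.mem_empty_iff_false, iff_false,
      not_and]
    intro h1 h2
    rw [h1] at h2
    have := congrArg ZMod.val h2
    rw [hval i hi, hval j hj] at this
    omega
  · intro i hi a
    simp only [Set.mem_setOf_eq, sub_self]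
    intro h
    have := congrArg ZMod.val h.symm
    rw [hval i hi, ZMod.val_zero] at this
    omega
  · intro i hi a
    exact ⟨e.symm (e a + ((i + 1 : ℕ) : ZMod p)), by simp⟩
  · intro i hi b
    refine ⟨e.symm (e b - ((i + 1 : ℕ) : ZMod p)), by simp⟩
  · intro i hi a b
    have hcast : ((p - 2 - i + 1 : ℕ) : ZMod p) = -((i + 1 : ℕ) : ZMod p) := by
      have hsum : (p - 2 - i + 1) + (i + 1) = p := by omega
      have : ((p - 2 - i + 1 : ℕ) : ZMod p) + ((i + 1 : ℕ) : ZMod p) = 0 := by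
        rw [← Nat.cast_add, hsum, ZMod.natCast_self]
      linear_combination this
    simp only [Set.mem_setOf_eq, hcast]
    constructor
    · intro h; rw [← h]; ring
    · intro h
      have : e b - e a = -(e a - e b) := by ring
      rw [this, h]; ring
  · ext x
    simp only [Set.mem_iUnion, Finset.mem_range, Set.mem_setOf_eq, exists_prop]
    constructor
    · rintro ⟨i, hi, h⟩ heq
      rw [show x.1 = x.2 from heq, sub_self] at h
      have := congrArg ZMod.val h.symm
      rw [hval i hi, ZMod.val_zero] at this
      omega
    · intro h
      set d : ZMod p := e x.2 - e x.1 with hd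
      have hdne : d ≠ 0 := by
        simp only [hd, sub_ne_zero]
        exact fun hc => h (e.injective hc).symm
      have hv0 : d.val ≠ 0 := fun hc => hdne ((ZMod.val_eq_zero d).mp hc)
      have hvlt : d.val < p := ZMod.val_lt d
      refine ⟨d.val - 1, by omega, ?_⟩
      have : (d.val - 1 + 1) = d.val := by omega
      rw [this, ZMod.natCast_val, ZMod.cast_id]
end

section
/- Let p ≥ 3 be odd and W a finite set with |W| = p; let W' = W × {0,1}. Then the set {((a,s),(b,t)) ∈ W' × W' : a ≠ b} can be partitioned into p − 1 mutually disjoint symmetric binary relations H_0, …, H_{p−2} on W', each with domain equal to W'. -/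
/-- Let `p ≥ 3` be odd, `W` a finite set with `|W| = p`, and `W' = W × {0,1}`. Then the set
of pairs `((a,s),(b,t))` with `a ≠ b` can be partitioned into `p − 1` mutually disjoint
symmetric binary relations on `W'`, each with domain `W'`. -/
theorem exists_symmetric_big_partition_on_doubled {W : Type*} [Fintype W]
    (p : ℕ) (hp : 3 ≤ p) (hodd : Odd p) (hW : Fintype.card W = p) :
    ∃ H : ℕ → Set ((W × Fin 2) × (W × Fin 2)),
      (∀ i < p - 1, ∀ j < p - 1, i ≠ j → H i ∩ H j = ∅) ∧
      (∀ i < p - 1, ∀ x y : W × Fin 2, (x, y) ∈ H i → (y, x) ∈ H i) ∧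
      (∀ i < p - 1, ∀ x : W × Fin 2, ∃ y : W × Fin 2, (x, y) ∈ H i) ∧
      (⋃ i ∈ Finset.range (p - 1), H i) =
        {x : (W × Fin 2) × (W × Fin 2) | x.1.1 ≠ x.2.1} := by
  haveI : NeZero p := ⟨by omega⟩
  obtain ⟨e⟩ : Nonempty (W ≃ ZMod p) := by
    have : Fintype.card W = Fintype.card (ZMod p) := by simp [ZMod.card, hW]
    exact ⟨Fintype.equivOfCardEq this⟩
  have hpos : ∀ a b : W, a ≠ b → 0 < (e a - e b).val := by
    intro a b hab
    rcases Nat.eq_zero_or_pos (e a - e b).val with h | h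
    · exact absurd (e.injective (sub_eq_zero.mp ((ZMod.val_eq_zero _).mp h)))
        hab
    · exact h
  have hsum : ∀ a b : W, a ≠ b → (e a - e b).val + (e b - e a).val = p := by
    intro a b hab
    have hne : e a - e b ≠ 0 := by
      intro h; exact hab (e.injective (sub_eq_zero.mp h))
    have h1 : (e b - e a) = -(e a - e b) := by ring
    rw [h1, ZMod.neg_val, if_neg hne]
    have h2 := hpos a b hab
    have h3 : (e a - e b).val < p := ZMod.val_lt _
    omega
  classical
  let c : W → W → ℕ := fun a b => min (e a - e b).val (e b - e a).val
  have hcsymm : ∀ a b, c a b = c b a := fun a b => min_comm _ _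
  have hcbound : ∀ a b : W, a ≠ b → 1 ≤ c a b ∧ 2 * c a b + 1 ≤ p := by
    intro a b hab
    have h0 := hsum a b hab
    have h1 := hpos a b hab
    have h2 := hpos b a hab.symm
    obtain ⟨k, hk⟩ := hodd
    show 1 ≤ min (e a - e b).val (e b - e a).val ∧
      2 * min (e a - e b).val (e b - e a).val + 1 ≤ p
    omega
  let idx : (W × Fin 2) × (W × Fin 2) → ℕ :=
    fun x => 2 * (c x.1.1 x.2.1 - 1) + (if x.1.2 = x.2.2 then 0 else 1)
  refine ⟨fun i => {x | x.1.1 ≠ x.2.1 ∧ idx x = i}, ?_, ?_, ?_, ?_⟩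
  · intro i _ j _ hij
    ext x
    simp only [Set.mem_inter_iff, Set.mem_setOf_eq, Set.mem_empty_iff_false, iff_false]
    rintro ⟨⟨_, h1⟩, ⟨_, h2⟩⟩
    exact hij (h1 ▸ h2 ▸ rfl)
  · rintro i _ ⟨a, s⟩ ⟨b, t⟩ ⟨hab, hix⟩
    refine ⟨Ne.symm hab, ?_⟩
    show 2 * (c b a - 1) + (if t = s then 0 else 1) = i
    rw [hcsymm b a]
    have hts : (if t = s then 0 else 1) = (if s = t then (0:ℕ) else 1) := by
      by_cases h : s = t
      · rw [if_pos h.symm, if_pos h]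
      · rw [if_neg (Ne.symm h), if_neg h]
    rw [hts]
    exact hix
  · rintro i hi ⟨a, s⟩
    set d : ℕ := i / 2 + 1 with hd
    set b : W := e.symm (e a + (d : ZMod p)) with hb
    set t : Fin 2 := if i % 2 = 0 then s else s + 1 with ht
    have hdlt : 2 * d ≤ p := by
      obtain ⟨k, hk⟩ := hodd; omega
    have hvd : ((d : ZMod p)).val = d := ZMod.val_natCast_of_lt (by omega)
    have hba : e b - e a = (d : ZMod p) := by rw [hb]; simp
    have hdne : (d : ZMod p) ≠ 0 := by
      intro h
      have := (ZMod.natCast_eq_zero_iff d p).mp h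
      have := Nat.le_of_dvd (by omega) this
      omega
    have hab : a ≠ b := by
      intro h
      apply hdne
      rw [← hba, ← congrArg e h, sub_self]
    have hsum' := hsum a b hab
    have hcval : c a b = d := by
      show min (e a - e b).val (e b - e a).val = d
      rw [hba, hvd] at hsum' ⊢
      omega
    refine ⟨(b, t), hab, ?_⟩
    show 2 * (c a b - 1) + (if s = t then 0 else 1) = i
    rw [hcval]
    rcases Nat.even_or_odd i with h | h
    · have h0 := Nat.even_iff.mp h
      have hts : t = s := by rw [ht, if_pos h0]
      rw [hts, if_pos rfl]
      omega
    · have h0 := Nat.odd_iff.mp h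
      have hts : t = s + 1 := by rw [ht, if_neg (by omega)]
      have hne : s ≠ t := by
        rw [hts]; fin_cases s <;> decide
      rw [if_neg hne]
      omega
  · ext x
    simp only [Set.mem_iUnion, Finset.mem_range, Set.mem_setOf_eq]
    constructor
    · rintro ⟨i, hi, hne, _⟩; exact hne
    · intro hne
      refine ⟨idx x, ?_, hne, rfl⟩
      obtain ⟨h1, h2⟩ := hcbound x.1.1 x.2.1 hne
      show 2 * (c x.1.1 x.2.1 - 1) + (if x.1.2 = x.2.2 then 0 else 1) < p - 1
      obtain ⟨k, hk⟩ := hodd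
      generalize c x.1.1 x.2.1 = m at h1 h2 ⊢
      split <;> omega
end

section
/- Let p ≥ 3 and let W be a finite set with |W| = p. Then W × W − Id_W can be partitioned into p − 1 mutually disjoint nonempty symmetric irreflexive binary relations on W. -/
/-- Let `p ≥ 3` and `W` a finite set with `|W| = p`. Then `W × W − Id_W` can be partitioned
into `p − 1` mutually disjoint nonempty symmetric irreflexive binary relations on `W`. -/
theorem exists_symmetric_partition_into_p_sub_one {W : Type*} [Fintype W]
    (p : ℕ) (hp : 3 ≤ p) (hW : Fintype.card W = p) :
    ∃ S : ℕ → Set (W × W),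
      (∀ i < p - 1, ∀ j < p - 1, i ≠ j → S i ∩ S j = ∅) ∧
      (∀ i < p - 1, (S i).Nonempty) ∧
      (∀ i < p - 1, ∀ a b : W, (a, b) ∈ S i → (b, a) ∈ S i) ∧
      (∀ i < p - 1, ∀ a : W, (a, a) ∉ S i) ∧
      (⋃ i ∈ Finset.range (p - 1), S i) = {x : W × W | x.1 ≠ x.2} := by
  have e : W ≃ Fin p := Fintype.equivFinOfCardEq hW
  have hp1 : 0 < p - 1 := by omega
  set f : W × W → ℕ := fun x => ((e x.1).val + (e x.2).val - 1) % (p - 1) with hf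
  refine ⟨fun i => {x | x.1 ≠ x.2 ∧ f x = i}, ?_, ?_, ?_, ?_, ?_⟩
  · intro i _ j _ hij
    ext x
    simp only [Set.mem_inter_iff, Set.mem_setOf_eq, Set.mem_empty_iff_false, iff_false]
    rintro ⟨⟨-, h1⟩, -, h2⟩
    exact hij (h1 ▸ h2)
  · intro i hi
    refine ⟨(e.symm ⟨0, by omega⟩, e.symm ⟨i + 1, by omega⟩), ?_, ?_⟩
    · simp only [ne_eq, EmbeddingLike.apply_eq_iff_eq, Fin.mk.injEq]
      omega
    · simp only [hf, Equiv.apply_symm_apply]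
      simpa using Nat.mod_eq_of_lt hi
  · intro i _ a b ⟨h1, h2⟩
    refine ⟨h1.symm, ?_⟩
    simpa [hf, Nat.add_comm] using h2
  · intro i _ a h
    exact h.1 rfl
  · ext x
    simp only [Set.mem_iUnion, Set.mem_setOf_eq, Finset.mem_range]
    constructor
    · rintro ⟨i, _, h, -⟩; exact h
    · intro h
      exact ⟨f x, Nat.mod_lt _ hp1, h, rfl⟩
end

section
/- Let α be a finite type, U a set, and A a collection of subsets of U^α that contains every diagonal D_ij, and is closed under binary union, complement relative to U^α, and every cylindrification C_i. Suppose that for all i, j ∈ α we are given functions p_ij : A → A satisfying, for all X, Y ∈ A and all i, j, k, l ∈ α: (P1) p_ij(X ∪ Y) = p_ij(X) ∪ p_ij(Y); (P2) p_ij(Xᶜ) = (p_ij(X))ᶜ; (P3) p_ij(C_k(X)) = C_{[i,j](k)}(p_ij(X)); (P4) p_ij(D_kl) = D_{[i,j](k) [i,j](l)}; (P5) p_ij(p_kl(X)) = p_{[i,j](k) [i,j](l)}(p_ij(X)); (P6) p_ij(p_ij(X)) = X. Assume that for some k ≠ l in α the operation p_kl is represented, i.e., p_kl(X) = P_kl(X)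 for all X ∈ A. Then for all m ≠ n in α there exists an injective map h from A into the subsets of U^α such that for all X, Y ∈ A and all i, j ∈ α: h(X ∪ Y) = h(X) ∪ h(Y), h(Xᶜ) = h(X)ᶜ, h(C_i(X)) = C_i(h(X)), h(D_ij) = D_ij, and h(p_mn(X)) = P_mn(h(X)). -/
/-- Cylindrification: `Cyl i X = {s : α → U | ∃ u, update s i u ∈ X}`. -/
def Cyl {α U : Type*} [DecidableEq α] (i : α) (X : Set (α → U)) : Set (α → U) :=
  {s | ∃ u : U, Function.update s i u ∈ X}

/-- Diagonal: `Diag i j = {s : α → U | s i = s j}`. -/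
def Diag {α : Type*} (U : Type*) (i j : α) : Set (α → U) :=
  {s | s i = s j}

/-- Concrete transposition operation: `Transp i j X = {s | s ∘ [i,j] ∈ X}`. -/
def Transp {α U : Type*} [DecidableEq α] (i j : α) (X : Set (α → U)) : Set (α → U) :=
  {s | s ∘ (Equiv.swap i j) ∈ X}

section Aux
variable {α U : Type*} [DecidableEq α]

lemma transp_eq_preimage (u v : α) (X : Set (α → U)) :
    Transp u v X = (· ∘ ⇑(Equiv.swap u v)) ⁻¹' X := rfl

lemma precomp_precomp (e₁ e₂ : Equiv.Perm α) (X : Set (α → U)) :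
    (· ∘ ⇑e₁) ⁻¹' ((· ∘ ⇑e₂) ⁻¹' X) = (· ∘ ⇑(e₁ * e₂)) ⁻¹' X := rfl

lemma transp_union (u v : α) (X Y : Set (α → U)) :
    Transp u v (X ∪ Y) = Transp u v X ∪ Transp u v Y := rfl

lemma transp_compl (u v : α) (X : Set (α → U)) :
    Transp u v Xᶜ = (Transp u v X)ᶜ := rfl

lemma transp_diag (u v i j : α) :
    Transp u v (Diag U i j) = Diag U (Equiv.swap u v i) (Equiv.swap u v j) := rfl

lemma transp_cyl (u v j : α) (X : Set (α → U)) :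
    Transp u v (Cyl j X) = Cyl (Equiv.swap u v j) (Transp u v X) := by
  ext s
  simp only [Transp, Cyl, Set.mem_setOf_eq]
  constructor
  · rintro ⟨w, hw⟩
    exact ⟨w, by rwa [Function.update_comp_equiv, Equiv.symm_swap, Equiv.swap_apply_self]⟩
  · rintro ⟨w, hw⟩
    exact ⟨w, by rwa [Function.update_comp_equiv, Equiv.symm_swap, Equiv.swap_apply_self] at hw⟩

end Aux


/-- If a collection `A` of subsets of `U^α`, containing the diagonals and closed under
union, complement and cylindrifications, carries abstract operations `p i j` satisfying
(P1)–(P6), and some `p k l` (`k ≠ l`) is the concrete transposition, then for every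
`m ≠ n` there is an injective map `h` on `A` preserving the cylindric operations and
taking `p m n` to the concrete transposition `P m n`. -/
theorem transpositions_all_or_none {α U : Type*} [Finite α] [DecidableEq α]
    (A : Set (Set (α → U)))
    (hAdiag : ∀ i j : α, Diag U i j ∈ A)
    (hAunion : ∀ X ∈ A, ∀ Y ∈ A, X ∪ Y ∈ A)
    (hAcompl : ∀ X ∈ A, Xᶜ ∈ A)
    (hAcyl : ∀ i : α, ∀ X ∈ A, Cyl i X ∈ A)
    (p : α → α → Set (α → U) → Set (α → U))
    (hpmem : ∀ i j : α, ∀ X ∈ A, p i j X ∈ A)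
    (hP1 : ∀ i j : α, ∀ X ∈ A, ∀ Y ∈ A, p i j (X ∪ Y) = p i j X ∪ p i j Y)
    (hP2 : ∀ i j : α, ∀ X ∈ A, p i j Xᶜ = (p i j X)ᶜ)
    (hP3 : ∀ i j k : α, ∀ X ∈ A, p i j (Cyl k X) = Cyl (Equiv.swap i j k) (p i j X))
    (hP4 : ∀ i j k l : α, p i j (Diag U k l) = Diag U (Equiv.swap i j k) (Equiv.swap i j l))
    (hP5 : ∀ i j k l : α, ∀ X ∈ A,
        p i j (p k l X) = p (Equiv.swap i j k) (Equiv.swap i j l) (p i j X))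
    (hP6 : ∀ i j : α, ∀ X ∈ A, p i j (p i j X) = X)
    (k l : α) (hkl : k ≠ l)
    (hrep : ∀ X ∈ A, p k l X = Transp k l X) :
    ∀ m n : α, m ≠ n →
      ∃ h : Set (α → U) → Set (α → U),
        Set.InjOn h A ∧
        (∀ X ∈ A, ∀ Y ∈ A, h (X ∪ Y) = h X ∪ h Y) ∧
        (∀ X ∈ A, h Xᶜ = (h X)ᶜ) ∧
        (∀ i : α, ∀ X ∈ A, h (Cyl i X) = Cyl i (h X)) ∧
        (∀ i j : α, h (Diag U i j) = Diag U i j) ∧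
        (∀ X ∈ A, h (p m n X) = Transp m n (h X)) := by
  intro m n hmn
  set sab := Equiv.swap m k with hsab
  set n' := Equiv.swap m k n with hn'
  set scd := Equiv.swap n' l with hscd
  -- basic facts
  have hkn' : n' ≠ k := by
    intro h
    apply hmn.symm
    have : Equiv.swap m k n' = Equiv.swap m k k := by rw [h]
    rw [Equiv.swap_apply_self, Equiv.swap_apply_right] at this
    exact this
  have hscdk : scd k = k := Equiv.swap_apply_of_ne_of_ne (Ne.symm hkn') hkl
  have hsabk : sab k = m := Equiv.swap_apply_right m k
  have hscdl : scd l = n' := Equiv.swap_apply_right n' l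
  have hsabn' : sab n' = n := Equiv.swap_apply_self m k n
  have hsabm : sab m = k := Equiv.swap_apply_left m k
  have hscdn' : scd n' = l := Equiv.swap_apply_left n' l
  -- the map
  set q : Set (α → U) → Set (α → U) := fun X => p n' l (p m k X) with hq
  set h : Set (α → U) → Set (α → U) := fun X => Transp m k (Transp n' l (q X)) with hh
  have hqmem : ∀ X ∈ A, q X ∈ A := fun X hX => hpmem _ _ _ (hpmem _ _ _ hX)
  refine ⟨h, ?_, ?_, ?_, ?_, ?_, ?_⟩
  · -- injective on A
    intro X hX Y hY hXY
    have hT : Transp m k (Transp n' l (q X)) = Transp m k (Transp n' l (q Y)) := hXY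
    rw [transp_eq_preimage, transp_eq_preimage (U := U) n', precomp_precomp,
        transp_eq_preimage, transp_eq_preimage (U := U) n', precomp_precomp] at hT
    have hsurj : Function.Surjective (fun s : α → U => s ∘ ⇑(sab * scd)) := by
      intro t
      exact ⟨t ∘ ⇑(sab * scd)⁻¹, by funext x; simp⟩
    have hqeq : q X = q Y := hsurj.preimage_injective hT
    have h1 : p m k X = p m k Y := by
      have := congrArg (p n' l) hqeq
      rwa [hP6 n' l _ (hpmem _ _ _ hX), hP6 n' l _ (hpmem _ _ _ hY)] at this
    have := congrArg (p m k) h1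
    rwa [hP6 m k _ hX, hP6 m k _ hY] at this
  · -- union
    intro X hX Y hY
    show Transp m k (Transp n' l (q (X ∪ Y))) = _
    rw [hq]
    simp only
    rw [hP1 m k X hX Y hY, hP1 n' l _ (hpmem _ _ _ hX) _ (hpmem _ _ _ hY),
        transp_union, transp_union]
  · -- complement
    intro X hX
    show Transp m k (Transp n' l (q Xᶜ)) = _
    rw [hq]
    simp only
    rw [hP2 m k X hX, hP2 n' l _ (hpmem _ _ _ hX), transp_compl, transp_compl]
  · -- cylindrification
    intro i X hX
    show Transp m k (Transp n' l (q (Cyl i X))) = _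
    rw [hq]
    simp only
    rw [hP3 m k i X hX, hP3 n' l _ _ (hpmem _ _ _ hX), transp_cyl, transp_cyl,
        Equiv.swap_apply_self, Equiv.swap_apply_self]
  · -- diagonals
    intro i j
    show Transp m k (Transp n' l (q (Diag U i j))) = _
    rw [hq]
    simp only
    rw [hP4 m k i j, hP4 n' l _ _, transp_diag, transp_diag,
        Equiv.swap_apply_self, Equiv.swap_apply_self,
        Equiv.swap_apply_self, Equiv.swap_apply_self]
  · -- transposition
    intro X hX
    show Transp m k (Transp n' l (q (p m n X))) = _
    rw [hq]
    simp only
    have e1 : p m k (p m n X) = p k n' (p m k X) := by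
      have := hP5 m k m n X hX
      rwa [hsabm, ← hn'] at this
    have e2 : p n' l (p k n' (p m k X)) = p k l (p n' l (p m k X)) := by
      have := hP5 n' l k n' (p m k X) (hpmem _ _ _ hX)
      rwa [hscdk, hscdn'] at this
    rw [e1, e2, hrep _ (hqmem X hX)]
    -- now concrete: Transp m k (Transp n' l (Transp k l Z)) = Transp m n (h X)
    show Transp m k (Transp n' l (Transp k l (q X))) = Transp m n (Transp m k (Transp n' l (q X)))
    rw [transp_eq_preimage, transp_eq_preimage (U := U) n', transp_eq_preimage (U := U) k l,
        precomp_precomp, precomp_precomp,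
        transp_eq_preimage (U := U) m n, transp_eq_preimage (U := U) m k,
        transp_eq_preimage (U := U) n', precomp_precomp, precomp_precomp]
    have key : Equiv.swap ((sab * scd) k) ((sab * scd) l) = Equiv.swap m n := by
      rw [Equiv.Perm.mul_apply, Equiv.Perm.mul_apply, hscdk, hsabk, hscdl, hsabn']
    have hperm : sab * scd * Equiv.swap k l = Equiv.swap m n * sab * scd := calc
      sab * scd * Equiv.swap k l
        = Equiv.swap ((sab * scd) k) ((sab * scd) l) * (sab * scd) :=
          Equiv.mul_swap_eq_swap_mul _ k l
      _ = Equiv.swap m n * (sab * scd) := by rw [key]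
      _ = Equiv.swap m n * sab * scd := (mul_assoc _ _ _).symm
    rw [hsab, hscd] at hperm
    rw [hperm]
end

section
/- Let α be a type containing at least three distinct elements 0, 1, 2, let U be a set, S, S' ⊆ U × U, X = {s ∈ U^α : (s(0), s(1)) ∈ S} and Y = {s ∈ U^α : (s(0), s(1)) ∈ S'}. Then C_2(s^1_2(X) ∩ s^0_2(Y)) = {s ∈ U^α : ∃c ∈ U, (s(0), c) ∈ S and (c, s(1)) ∈ S'}. -/
/-- Substitution operation `s^i_j(X) = C_i(D_ij ∩ X)`. -/
def Subst {α U : Type*} [DecidableEq α] (i j : α) (X : Set (α → U)) : Set (α → U) :=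
  Cyl i (Diag U i j ∩ X)

/-- For distinct `a0, a1, a2`, `X = {s | (s a0, s a1) ∈ S}` and
`Y = {s | (s a0, s a1) ∈ S'}`, the term `C_2(s^1_2(X) ∩ s^0_2(Y))` expresses the
relation composition: it equals `{s | ∃ c, (s a0, c) ∈ S ∧ (c, s a1) ∈ S'}`. -/
theorem cyl_subst_expresses_composition {α U : Type*} [DecidableEq α]
    (a0 a1 a2 : α) (h01 : a0 ≠ a1) (h02 : a0 ≠ a2) (h12 : a1 ≠ a2)
    (S S' : Set (U × U)) (X Y : Set (α → U))
    (hX : X = {s | (s a0, s a1) ∈ S}) (hY : Y = {s | (s a0, s a1) ∈ S'}) :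
    Cyl a2 (Subst a1 a2 X ∩ Subst a0 a2 Y) =
      {s : α → U | ∃ c : U, (s a0, c) ∈ S ∧ (c, s a1) ∈ S'} := by
  subst hX hY
  ext s
  simp only [Cyl, Subst, Diag, Set.mem_inter_iff, Set.mem_setOf_eq]
  constructor
  · rintro ⟨u, ⟨v, hv1, hv2⟩, ⟨w, hw1, hw2⟩⟩
    simp only [Function.update_apply, if_pos rfl, if_neg h01, if_neg h02,
      if_neg h12, if_neg h01.symm, if_neg h02.symm, if_neg h12.symm] at hv1 hv2 hw1 hw2
    refine ⟨u, ?_, ?_⟩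
    · rwa [hv1] at hv2
    · rwa [hw1] at hw2
  · rintro ⟨c, hc1, hc2⟩
    refine ⟨c, ⟨c, ?_, ?_⟩, ⟨c, ?_, ?_⟩⟩ <;>
      simp [Function.update_apply, h01, h02, h12, h01.symm, h02.symm, h12.symm, hc1, hc2]
end

section
/- Let Z be a set, q ≥ 2, and S_0, …, S_q equivalence relations on Z such that S_i ∩ S_j = Id_Z and S_i ∘ S_j = Z × Z for all i ≠ j. Then for all pairwise distinct i, j, k ≤ q and every (v,w) ∈ S_k with v ≠ w, there exists u ∈ Z with u ≠ v, u ≠ w, (u,v) ∈ S_i and (u,w) ∈ S_j. -/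
/-- Let `q ≥ 2` and `S_0, …, S_q` equivalence relations on `Z` with `S_i ∩ S_j = Id_Z` and
`S_i ∘ S_j = Z × Z` for `i ≠ j`. Then for pairwise distinct `i, j, k` and `(v,w) ∈ S_k`
with `v ≠ w`, there is `u` with `u ≠ v`, `u ≠ w`, `(u,v) ∈ S_i` and `(u,w) ∈ S_j`. -/
theorem exists_common_neighbor {Z : Type*} (q : ℕ) (hq : 2 ≤ q)
    (S : Fin (q + 1) → Set (Z × Z))
    (hrefl : ∀ i z, (z, z) ∈ S i)
    (hsymm : ∀ i a b, (a, b) ∈ S i → (b, a) ∈ S i)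
    (htrans : ∀ i a b c, (a, b) ∈ S i → (b, c) ∈ S i → (a, c) ∈ S i)
    (hinter : ∀ i j, i ≠ j → S i ∩ S j = Set.diagonal Z)
    (hcomp : ∀ i j, i ≠ j → relComp (S i) (S j) = Set.univ) :
    ∀ i j k : Fin (q + 1), i ≠ j → i ≠ k → j ≠ k →
      ∀ v w : Z, (v, w) ∈ S k → v ≠ w →
        ∃ u : Z, u ≠ v ∧ u ≠ w ∧ (u, v) ∈ S i ∧ (u, w) ∈ S j := by
  intro i j k hij hik hjk v w hvw hne
  have h : ((w, v) : Z × Z) ∈ relComp (S i) (S j) := by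
    rw [hcomp i j hij]; trivial
  obtain ⟨u, huw, huv⟩ := h
  refine ⟨u, ?_, ?_, huv, hsymm _ _ _ huw⟩
  · intro h
    subst h
    exact hne (hinter j k hjk ▸ (Set.mem_inter (hsymm _ _ _ huw) hvw) :
      (u, w) ∈ Set.diagonal Z)
  · intro h
    subst h
    exact hne.symm (hinter i k hik ▸ (Set.mem_inter huv (hsymm _ _ _ hvw)) :
      (u, v) ∈ Set.diagonal Z)
end
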